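/- arXiv:1802.02304 — 6 statements merged into one kernel-verified Lean document; each statement's English description precedes it below -/
import Mathlib

section
/- The joint (−1)-eigenspace V is contained in E_0, and one has the direct sum decompositions E = V ⊕ (F₋ + F₊) and E_0 = V ⊕ ((F₋ + F₊) ∩ E_0); equivalently, the natural maps V → E_0/((F₋ + F₊) ∩ E_0) and V → E/(F₋ + F₊) induced by inclusion are isomorphisms of complex vector spaces. -/
/-- With `k ≥ 1`, `E` a complex vector space, `wm, wp`
("w₋", "w₊") linear involutions with `(wp ∘ wm)^k = id`, `r = wp ∘ wm`,
`F₋ = ker (wm - id)`, `F₊ = ker (wp - id)`, `E_0 = ker (r - id)` and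
`V = {v | wm v = -v and wp v = -v}` the joint `(-1)`-eigenspace:
`V ⊆ E_0`, and one has direct sum decompositions `E = V ⊕ (F₋ + F₊)` and
`E_0 = V ⊕ ((F₋ + F₊) ∩ E_0)`; in particular the natural maps
`V → E_0/((F₋ + F₊) ∩ E_0)` and `V → E/(F₋ + F₊)` are isomorphisms. -/
theorem stmt4 (k : ℕ) (hk : 1 ≤ k)
    {E : Type*} [AddCommGroup E] [Module ℂ E]
    (wm wp : E →ₗ[ℂ] E)
    (hm : wm * wm = 1) (hp : wp * wp = 1)
    (hord : (wp * wm) ^ k = 1) :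
    LinearMap.ker (wm + 1) ⊓ LinearMap.ker (wp + 1) ≤ LinearMap.ker (wp * wm - 1) ∧
    Disjoint (LinearMap.ker (wm + 1) ⊓ LinearMap.ker (wp + 1))
      (LinearMap.ker (wm - 1) ⊔ LinearMap.ker (wp - 1)) ∧
    (LinearMap.ker (wm + 1) ⊓ LinearMap.ker (wp + 1)) ⊔
      (LinearMap.ker (wm - 1) ⊔ LinearMap.ker (wp - 1)) = ⊤ ∧
    Disjoint (LinearMap.ker (wm + 1) ⊓ LinearMap.ker (wp + 1))
      ((LinearMap.ker (wm - 1) ⊔ LinearMap.ker (wp - 1)) ⊓ LinearMap.ker (wp * wm - 1)) ∧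
    (LinearMap.ker (wm + 1) ⊓ LinearMap.ker (wp + 1)) ⊔
      ((LinearMap.ker (wm - 1) ⊔ LinearMap.ker (wp - 1)) ⊓ LinearMap.ker (wp * wm - 1))
      = LinearMap.ker (wp * wm - 1) := by
  set r : E →ₗ[ℂ] E := wp * wm with hr
  set T : E →ₗ[ℂ] E := ∑ j ∈ Finset.range k, r ^ j with hT
  set S : E →ₗ[ℂ] E := ∑ j ∈ Finset.range k, ∑ i ∈ Finset.range j, r ^ i with hS
  have hrk : r ^ k = 1 := hord
  -- shifting the geometric sum
  have hsucc : ∑ j ∈ Finset.range k, r ^ (j + 1) = T := by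
    have h1 := Finset.sum_range_succ' (fun j => r ^ j) k
    have h2 := Finset.sum_range_succ (fun j => r ^ j) k
    rw [h2, hrk] at h1
    rw [hT]
    simp only [pow_zero] at h1
    have := h1.symm
    -- this : ∑ j ∈ range k, r ^ (j+1) + 1 = ∑ j ∈ range k, r ^ j + 1
    exact add_right_cancel this
  have hrT : r * T = T := by
    rw [hT, Finset.mul_sum]
    calc ∑ j ∈ Finset.range k, r * r ^ j = ∑ j ∈ Finset.range k, r ^ (j + 1) := by
          simp [pow_succ']
      _ = T := hsucc
  have hTr : T * r = T := by
    rw [hT, Finset.sum_mul]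
    calc ∑ j ∈ Finset.range k, r ^ j * r = ∑ j ∈ Finset.range k, r ^ (j + 1) := by
          simp [pow_succ]
      _ = T := hsucc
  have hsr : (wm * wp) * r = 1 := by
    rw [hr, mul_assoc, ← mul_assoc wp wp wm, hp, one_mul, hm]
  have hrs : r * (wm * wp) = 1 := by
    rw [hr, mul_assoc, ← mul_assoc wm wm wp, hm, one_mul, hp]
  have hcomm : Commute (wm * wp) r := by
    show (wm * wp) * r = r * (wm * wp)
    rw [hsr, hrs]
  have hspow : ∀ j, j ≤ k → (wm * wp) ^ j = r ^ (k - j) := by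
    intro j hj
    have h1 : (wm * wp) ^ j * r ^ j = 1 := by
      rw [← hcomm.mul_pow, hsr, one_pow]
    calc (wm * wp) ^ j = (wm * wp) ^ j * (r ^ j * r ^ (k - j)) := by
          rw [← pow_add, Nat.add_sub_cancel' hj, hrk, mul_one]
      _ = ((wm * wp) ^ j * r ^ j) * r ^ (k - j) := by rw [mul_assoc]
      _ = r ^ (k - j) := by rw [h1, one_mul]
  have hsT : ∑ j ∈ Finset.range k, (wm * wp) ^ j = T := by
    calc ∑ j ∈ Finset.range k, (wm * wp) ^ j
        = ∑ j ∈ Finset.range k, r ^ (k - j) :=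
          Finset.sum_congr rfl (fun j hj => hspow j (le_of_lt (Finset.mem_range.mp hj)))
      _ = ∑ j ∈ Finset.range k, r ^ (k - (k - 1 - j)) :=
          (Finset.sum_range_reflect (fun j => r ^ (k - j)) k).symm
      _ = ∑ j ∈ Finset.range k, r ^ (j + 1) := by
          refine Finset.sum_congr rfl (fun j hj => ?_)
          have hjk := Finset.mem_range.mp hj
          have : k - (k - 1 - j) = j + 1 := by omega
          rw [this]
      _ = T := hsucc
  have hwmr : ∀ j : ℕ, wm * r ^ j = (wm * wp) ^ j * wm := by
    intro j
    induction j with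
    | zero => simp
    | succ n ih =>
      have h1 : wm * r ^ (n + 1) = (wm * wp) * (wm * r ^ n) := by
        rw [pow_succ', hr]
        noncomm_ring
      rw [h1, ih, ← mul_assoc, ← pow_succ']
  have hwmT : wm * T = T * wm := by
    rw [hT, Finset.mul_sum, Finset.sum_mul]
    calc ∑ j ∈ Finset.range k, wm * r ^ j
        = ∑ j ∈ Finset.range k, (wm * wp) ^ j * wm :=
          Finset.sum_congr rfl (fun j _ => hwmr j)
      _ = (∑ j ∈ Finset.range k, (wm * wp) ^ j) * wm := (Finset.sum_mul _ _ _).symm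
      _ = (∑ j ∈ Finset.range k, r ^ j) * wm := by rw [hsT, hT]
      _ = ∑ j ∈ Finset.range k, r ^ j * wm := Finset.sum_mul _ _ _
  have hwpr : wp = r * wm := by rw [hr, mul_assoc, hm, mul_one]
  have hwpT : wp * T = wm * T := by
    rw [hwpr, mul_assoc, hwmT, ← mul_assoc, hrT, ← hwmT]
  have hTwp : T * wp = T * wm := by
    rw [hwpr, ← mul_assoc, hTr]
  have hgeom : ∀ j : ℕ, (1 - r) * (∑ i ∈ Finset.range j, r ^ i) = 1 - r ^ j := by
    intro j
    induction j with
    | zero => simp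
    | succ n ih =>
      rw [Finset.sum_range_succ, mul_add, ih, pow_succ']
      noncomm_ring
  have hSid : (1 - r) * S = (k : ℂ) • 1 - T := by
    rw [hS, Finset.mul_sum]
    calc ∑ j ∈ Finset.range k, (1 - r) * ∑ i ∈ Finset.range j, r ^ i
        = ∑ j ∈ Finset.range k, (1 - r ^ j) := Finset.sum_congr rfl (fun j _ => hgeom j)
      _ = (k : ℂ) • 1 - T := by
          rw [Finset.sum_sub_distrib, Finset.sum_const, Finset.card_range, hT,
            Nat.cast_smul_eq_nsmul]
  -- the three relevant operators
  set A : E →ₗ[ℂ] E := T - wm * T with hA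
  set B : E →ₗ[ℂ] E := (1 + wm) * ((2 : ℂ) • S + T) with hB
  set C : E →ₗ[ℂ] E := (1 + wp) * ((2 : ℂ) • (wm * S)) with hC
  have hmain : ((2 * k : ℕ) : ℂ) • (1 : E →ₗ[ℂ] E) = A + (B - C) := by
    have e1 : B = (2 : ℂ) • S + T + ((2 : ℂ) • (wm * S) + wm * T) := by
      rw [hB, add_mul, one_mul, mul_add, mul_smul_comm]
    have e2 : C = (2 : ℂ) • (wm * S) + (2 : ℂ) • (r * S) := by
      rw [hC, add_mul, one_mul, mul_smul_comm, ← mul_assoc, ← hr]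
    rw [hA, e1, e2]
    have e3 : S - r * S = (k : ℂ) • 1 - T := by rw [← hSid, sub_mul, one_mul]
    have e4 : T - wm * T + ((2 : ℂ) • S + T + ((2 : ℂ) • (wm * S) + wm * T)
        - ((2 : ℂ) • (wm * S) + (2 : ℂ) • (r * S)))
        = (2 : ℂ) • T + (2 : ℂ) • (S - r * S) := by
      module
    rw [e4, e3, smul_sub, smul_smul]
    push_cast
    module
  -- operator identities giving memberships
  have hAm : (wm + 1) * A = 0 := by
    have h : (wm + 1) * A = T - (wm * wm) * T := by rw [hA]; noncomm_ring
    rw [hm, one_mul, sub_self] at h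
    exact h
  have hAp : (wp + 1) * A = 0 := by
    have h : (wp + 1) * A = (wp * T - wm * T) + (T - (wp * wm) * T) := by
      rw [hA]; noncomm_ring
    rw [hwpT, ← hr, hrT, sub_self, sub_self, add_zero] at h
    exact h
  have hBm : (wm - 1) * B = 0 := by
    have key : (wm - 1) * (1 + wm) = 0 := by
      have h : (wm - 1) * (1 + wm) = wm * wm - 1 := by noncomm_ring
      rw [hm, sub_self] at h
      exact h
    rw [hB, ← mul_assoc, key, zero_mul]
  have hCp : (wp - 1) * C = 0 := by
    have key : (wp - 1) * (1 + wp) = 0 := by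
      have h : (wp - 1) * (1 + wp) = wp * wp - 1 := by noncomm_ring
      rw [hp, sub_self] at h
      exact h
    rw [hC, ← mul_assoc, key, zero_mul]
  have hc2k : ((2 * k : ℕ) : ℂ) ≠ 0 := Nat.cast_ne_zero.mpr (by omega)
  -- decomposition of an arbitrary vector
  have hdecomp : ∀ x : E, ∃ a b c : E,
      ((wm + 1) a = 0 ∧ (wp + 1) a = 0) ∧ (wm - 1) b = 0 ∧ (wp - 1) c = 0 ∧
        x = a + (b + c) := by
    intro x
    set d : ℂ := ((2 * k : ℕ) : ℂ)⁻¹ with hd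
    refine ⟨d • A x, d • B x, d • (-(C x)), ⟨?_, ?_⟩, ?_, ?_, ?_⟩
    · rw [map_smul, ← Module.End.mul_apply, hAm]
      simp
    · rw [map_smul, ← Module.End.mul_apply, hAp]
      simp
    · rw [map_smul, ← Module.End.mul_apply, hBm]
      simp
    · rw [map_smul, map_neg, ← Module.End.mul_apply, hCp]
      simp
    · have h5 : ((2 * k : ℕ) : ℂ) • x = A x + (B x - C x) := by
        have := LinearMap.congr_fun hmain x
        simpa only [LinearMap.smul_apply, Module.End.one_apply, LinearMap.add_apply,
          LinearMap.sub_apply] using this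
      have hxe : d • (((2 * k : ℕ) : ℂ) • x) = d • (A x + (B x - C x)) := by rw [h5]
      rw [smul_smul, inv_mul_cancel₀ hc2k, one_smul] at hxe
      calc x = d • (A x + (B x - C x)) := hxe
        _ = d • A x + (d • B x + d • (-(C x))) := by module
  -- V ≤ E₀
  have part1 : LinearMap.ker (wm + 1) ⊓ LinearMap.ker (wp + 1) ≤ LinearMap.ker (r - 1) := by
    intro x hx
    obtain ⟨h1, h2⟩ := Submodule.mem_inf.mp hx
    rw [LinearMap.mem_ker] at h1 h2 ⊢
    simp only [LinearMap.add_apply, Module.End.one_apply] at h1 h2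
    have hmx : wm x = -x := eq_neg_of_add_eq_zero_left h1
    have hpx : wp x = -x := eq_neg_of_add_eq_zero_left h2
    have hrx : r x = x := by rw [hr, Module.End.mul_apply, hmx, map_neg, hpx, neg_neg]
    rw [LinearMap.sub_apply, Module.End.one_apply, hrx, sub_self]
  -- r fixes V, hence T acts by k on V
  have hVfix : ∀ x : E, (wm + 1) x = 0 → (wp + 1) x = 0 → ∀ j : ℕ, (r ^ j) x = x := by
    intro x h1 h2 j
    simp only [LinearMap.add_apply, Module.End.one_apply] at h1 h2
    have hmx : wm x = -x := eq_neg_of_add_eq_zero_left h1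
    have hpx : wp x = -x := eq_neg_of_add_eq_zero_left h2
    have hrx : r x = x := by
      rw [hr, Module.End.mul_apply, hmx, map_neg, hpx, neg_neg]
    induction j with
    | zero => simp
    | succ n ih =>
      rw [pow_succ, Module.End.mul_apply, hrx, ih]
  have part2 : Disjoint (LinearMap.ker (wm + 1) ⊓ LinearMap.ker (wp + 1))
      (LinearMap.ker (wm - 1) ⊔ LinearMap.ker (wp - 1)) := by
    rw [Submodule.disjoint_def]
    intro x hxV hxN
    obtain ⟨h1, h2⟩ := Submodule.mem_inf.mp hxV
    rw [LinearMap.mem_ker] at h1 h2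
    obtain ⟨y, hy, z, hz, hyz⟩ := Submodule.mem_sup.mp hxN
    rw [LinearMap.mem_ker] at hy hz
    have hwy : wm y = y := by
      simp only [LinearMap.sub_apply, Module.End.one_apply] at hy
      exact sub_eq_zero.mp hy
    have hwz : wp z = z := by
      simp only [LinearMap.sub_apply, Module.End.one_apply] at hz
      exact sub_eq_zero.mp hz
    -- apply Q = (1 - wm) * T to x = y + z in two ways
    have hQ1 : (1 - wm) * T = T * (1 - wm) := by
      rw [sub_mul, mul_sub, one_mul, mul_one, hwmT]
    have hQ2 : (1 - wm) * T = T * (1 - wp) := by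
      rw [sub_mul, mul_sub, one_mul, mul_one, hwmT, ← hTwp]
    have hTx : T x = (k : ℂ) • x := by
      rw [hT, LinearMap.sum_apply]
      calc ∑ j ∈ Finset.range k, (r ^ j) x = ∑ _j ∈ Finset.range k, x :=
            Finset.sum_congr rfl (fun j _ => hVfix x h1 h2 j)
        _ = (k : ℂ) • x := by
            rw [Finset.sum_const, Finset.card_range, Nat.cast_smul_eq_nsmul]
    have hmx : wm x = -x := by
      simp only [LinearMap.add_apply, Module.End.one_apply] at h1
      exact eq_neg_of_add_eq_zero_left h1
    have hQx : ((1 - wm) * T) x = ((2 * k : ℕ) : ℂ) • x := by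
      rw [Module.End.mul_apply, hTx, map_smul, LinearMap.sub_apply, Module.End.one_apply,
        hmx, sub_neg_eq_add, ← two_smul ℂ x, smul_smul]
      push_cast
      rw [mul_comm]
    have hQy : ((1 - wm) * T) y = 0 := by
      rw [hQ1, Module.End.mul_apply, LinearMap.sub_apply, Module.End.one_apply, hwy,
        sub_self, map_zero]
    have hQz : ((1 - wm) * T) z = 0 := by
      rw [hQ2, Module.End.mul_apply, LinearMap.sub_apply, Module.End.one_apply, hwz,
        sub_self, map_zero]
    have : ((2 * k : ℕ) : ℂ) • x = 0 := by
      rw [← hQx, ← hyz, map_add, hQy, hQz, add_zero]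
    exact (smul_eq_zero.mp this).resolve_left hc2k
  have part3 : (LinearMap.ker (wm + 1) ⊓ LinearMap.ker (wp + 1)) ⊔
      (LinearMap.ker (wm - 1) ⊔ LinearMap.ker (wp - 1)) = ⊤ := by
    rw [eq_top_iff]
    intro x _
    obtain ⟨a, b, c, ⟨ha1, ha2⟩, hb, hc, hx⟩ := hdecomp x
    refine Submodule.mem_sup.mpr ⟨a, ?_, b + c, ?_, hx.symm⟩
    · exact Submodule.mem_inf.mpr ⟨LinearMap.mem_ker.mpr ha1, LinearMap.mem_ker.mpr ha2⟩
    · exact Submodule.add_mem_sup (LinearMap.mem_ker.mpr hb) (LinearMap.mem_ker.mpr hc)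
  refine ⟨part1, part2, part3, Disjoint.mono_right inf_le_left part2, ?_⟩
  -- part 5
  apply le_antisymm
  · exact sup_le part1 inf_le_right
  · intro x hx
    obtain ⟨a, b, c, ⟨ha1, ha2⟩, hb, hc, hxd⟩ := hdecomp x
    have haV : a ∈ LinearMap.ker (wm + 1) ⊓ LinearMap.ker (wp + 1) :=
      Submodule.mem_inf.mpr ⟨LinearMap.mem_ker.mpr ha1, LinearMap.mem_ker.mpr ha2⟩
    have haE0 : a ∈ LinearMap.ker (r - 1) := part1 haV
    have hbcE0 : b + c ∈ LinearMap.ker (r - 1) := by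
      have : b + c = x - a := by rw [hxd]; abel
      rw [this]
      exact Submodule.sub_mem _ hx haE0
    refine Submodule.mem_sup.mpr ⟨a, haV, b + c, ?_, hxd.symm⟩
    exact Submodule.mem_inf.mpr
      ⟨Submodule.add_mem_sup (LinearMap.mem_ker.mpr hb) (LinearMap.mem_ker.mpr hc), hbcE0⟩
end

section
/- Suppose p ∈ E is nonzero, satisfies w₊ p = −p, and spans the full (−1)-eigenspace of w₊, i.e., {x ∈ E : w₊ x = −x} = ℂ·p. Then exactly one of the following holds: p ∈ E_0; or k is even and p ∈ E_{k/2}; or there is an integer ℓ with 0 < ℓ < k/2 such that p ∈ E_ℓ + E_{−ℓ}. -/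
/-!
Since `r ^ k = 1` and `X ^ k - 1` splits into distinct linear factors, `E` is the sum of the
independent eigenspaces `E_ℓ`, and `w₊` maps `E_ℓ` to `E_{-ℓ}` because it conjugates `r = w₊w₋`
to `r⁻¹ = w₋w₊`. Writing `p = ∑ q_ℓ` with `q_ℓ ∈ E_ℓ` gives `2p = p - w₊p = ∑ (q_ℓ - w₊q_ℓ)`.
Some summand is nonzero; it lies in `E_ℓ + E_{-ℓ}` and in the `(-1)`-eigenspace of `w₊`, so it is
a nonzero multiple of `p`, whence `p ∈ E_ℓ + E_{-ℓ}`. The index can be normalised to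
`0 ≤ ℓ ≤ k/2`, and independence of the eigenspaces makes the normalised `ℓ` unique; the three
alternatives are `ℓ = 0`, `ℓ = k/2` and `0 < ℓ < k/2`.
-/

/-- The `ζ^ℓ`-eigenspace `E_ℓ = ker (r - ζ^ℓ • id)` of a linear map `r`. -/
noncomputable def rEig {E : Type*} [AddCommGroup E] [Module ℂ E]
    (r : E →ₗ[ℂ] E) (ζ : ℂ) (ℓ : ℤ) : Submodule ℂ E :=
  LinearMap.ker (r - ζ ^ ℓ • 1)

open Polynomial

theorem IsPrimitiveRoot.zpow_eq_zpow_iff {K : Type*} [Field K] {ζ : K} {k : ℕ}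
    (hζ : IsPrimitiveRoot ζ k) (hk : k ≠ 0) (a b : ℤ) : ζ ^ a = ζ ^ b ↔ (k : ℤ) ∣ a - b := by
  have hζ0 := hζ.ne_zero hk
  rw [← hζ.zpow_eq_one_iff_dvd, zpow_sub₀ hζ0, div_eq_one_iff_eq (zpow_ne_zero _ hζ0)]

theorem Int.eq_of_dvd_sub_or_dvd_add {k a b : ℤ} (ha : 0 ≤ a) (hak : 2 * a ≤ k) (hb : 0 ≤ b)
    (hbk : 2 * b ≤ k) (h : k ∣ a - b ∨ k ∣ a + b) : a = b := by
  obtain ⟨t, ht⟩ | ⟨t, ht⟩ := h <;>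
    obtain ht' | rfl | ht' | ht' := (by omega : t < 0 ∨ t = 0 ∨ t = 1 ∨ 1 < t) <;>
    nlinarith

namespace Module.End

variable {K V : Type*} [Field K] [AddCommGroup V] [Module K V]

theorem ker_aeval_prod_X_sub_C (f : End K V) (s : Finset K) :
    LinearMap.ker (aeval f (∏ μ ∈ s, (X - C μ))) = ⨆ μ ∈ s, f.eigenspace μ := by
  classical
  induction s using Finset.induction_on with
  | empty => simp [one_eq_id]
  | insert a s ha ih =>
    have hcop : IsCoprime (X - C a) (∏ μ ∈ s, (X - C μ)) :=
      IsCoprime.prod_right fun μ hμ => isCoprime_X_sub_C_of_isUnit_sub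
        (sub_ne_zero.mpr (ne_of_mem_of_not_mem hμ ha).symm).isUnit
    rw [Finset.prod_insert ha, ← sup_ker_aeval_eq_ker_aeval_mul_of_coprime f hcop, ih,
      Finset.iSup_insert, eigenspace_def]
    simp [Module.algebraMap_end_eq_smul_id, one_eq_id]

theorem iSup_eigenspace_nthRootsFinset_eq_top {k : ℕ} (hk : k ≠ 0) {ζ : K}
    (hζ : IsPrimitiveRoot ζ k) {f : End K V} (hf : f ^ k = 1) :
    ⨆ μ ∈ nthRootsFinset k (1 : K), f.eigenspace μ = ⊤ := by
  rw [← ker_aeval_prod_X_sub_C, ← X_pow_sub_one_eq_prod (Nat.pos_of_ne_zero hk) hζ]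
  simp [hf]

theorem disjoint_eigenspace_sup_eigenspace (f : End K V) {a b c d : K}
    (h : Disjoint ({a, b} : Set K) {c, d}) :
    Disjoint (f.eigenspace a ⊔ f.eigenspace b) (f.eigenspace c ⊔ f.eigenspace d) := by
  simpa only [iSup_pair] using f.eigenspaces_iSupIndep.disjoint_biSup_biSup h

theorem apply_mem_eigenspace_inv {s t : End K V} (hs : s * s = 1) (ht : t * t = 1) {u : K}
    {x : V} (hx : x ∈ (t * s).eigenspace u) : t x ∈ (t * s).eigenspace u⁻¹ := by
  rw [mem_eigenspace_iff] at hx ⊢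
  have hst : u • s (t x) = x := by
    rw [← map_smul, ← map_smul, ← hx, mul_apply, ← mul_apply t t, ht, one_apply, ← mul_apply, hs,
      one_apply]
  rcases eq_or_ne u 0 with rfl | hu
  · rw [← hst, zero_smul, map_zero, map_zero, smul_zero]
  · rw [mul_apply, ← inv_smul_smul₀ hu (s (t x)), hst, map_smul]

theorem exists_mem_eigenspace_sup_eigenspace_inv [NeZero (2 : K)] {s t : End K V}
    (hs : s * s = 1) (ht : t * t = 1) {S : Finset K} {p : V}
    (hpS : p ∈ ⨆ μ ∈ S, (t * s).eigenspace μ) (hp0 : p ≠ 0) (htp : t p = -p)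
    (hspan : ∀ x, t x = -x → ∃ c : K, x = c • p) :
    ∃ μ ∈ S, p ∈ (t * s).eigenspace μ ⊔ (t * s).eigenspace μ⁻¹ := by
  obtain ⟨q, hq⟩ := (Submodule.mem_iSup_finset_iff_exists_sum _ p).mp hpS
  have hsum : ∑ μ ∈ S, ((q μ : V) - t (q μ)) = (2 : K) • p := by
    rw [Finset.sum_sub_distrib, ← map_sum, hq, htp, two_smul, sub_neg_eq_add]
  obtain ⟨μ, hμS, hμ⟩ :=
    Finset.exists_ne_zero_of_sum_ne_zero (hsum ▸ smul_ne_zero two_ne_zero hp0)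
  obtain ⟨c, hc⟩ := hspan ((q μ : V) - t (q μ)) (by
    rw [map_sub, ← mul_apply, ht, one_apply, neg_sub])
  have hc0 : c ≠ 0 := by rintro rfl; exact hμ (hc.trans (zero_smul _ _))
  refine ⟨μ, hμS, ?_⟩
  rw [← inv_smul_smul₀ hc0 p, ← hc]
  exact Submodule.smul_mem _ _
    (Submodule.sub_mem_sup (q μ).2 (apply_mem_eigenspace_inv hs ht (q μ).2))

end Module.End

section rEig

variable {E : Type*} [AddCommGroup E] [Module ℂ E]

noncomputable def rEigPair (r : Module.End ℂ E) (ζ : ℂ) (ℓ : ℤ) : Submodule ℂ E :=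
  rEig r ζ ℓ ⊔ rEig r ζ (-ℓ)

theorem rEig_eq_eigenspace (r : Module.End ℂ E) (ζ : ℂ) (ℓ : ℤ) :
    rEig r ζ ℓ = r.eigenspace (ζ ^ ℓ) :=
  Module.End.eigenspace_def.symm

theorem rEigPair_eq_eigenspace_sup (r : Module.End ℂ E) (ζ : ℂ) (ℓ : ℤ) :
    rEigPair r ζ ℓ = r.eigenspace (ζ ^ ℓ) ⊔ r.eigenspace (ζ ^ ℓ)⁻¹ := by
  rw [rEigPair, rEig_eq_eigenspace, rEig_eq_eigenspace, zpow_neg]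

theorem rEigPair_neg (r : Module.End ℂ E) (ζ : ℂ) (ℓ : ℤ) :
    rEigPair r ζ (-ℓ) = rEigPair r ζ ℓ := by
  rw [rEigPair, rEigPair, neg_neg, sup_comm]

variable {k : ℕ} {ζ : ℂ} (r : Module.End ℂ E)

theorem rEig_congr (hk : k ≠ 0) (hζ : IsPrimitiveRoot ζ k) {a b : ℤ} (h : (k : ℤ) ∣ a - b) :
    rEig r ζ a = rEig r ζ b := by
  rw [rEig, rEig, (hζ.zpow_eq_zpow_iff hk a b).mpr h]

theorem rEigPair_congr (hk : k ≠ 0) (hζ : IsPrimitiveRoot ζ k) {a b : ℤ}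
    (h : (k : ℤ) ∣ a - b) : rEigPair r ζ a = rEigPair r ζ b := by
  have h' : (k : ℤ) ∣ -a - -b := by rw [neg_sub_neg, ← neg_sub]; exact h.neg_right
  rw [rEigPair, rEigPair, rEig_congr r hk hζ h, rEig_congr r hk hζ h']

theorem rEigPair_eq_rEig (hk : k ≠ 0) (hζ : IsPrimitiveRoot ζ k) {ℓ : ℤ}
    (h : (k : ℤ) ∣ 2 * ℓ) : rEigPair r ζ ℓ = rEig r ζ ℓ := by
  have h' : (k : ℤ) ∣ -ℓ - ℓ := by rw [← neg_add', ← two_mul]; exact h.neg_right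
  rw [rEigPair, rEig_congr r hk hζ h', sup_idem]

theorem exists_rEigPair_eq (hk : k ≠ 0) (hζ : IsPrimitiveRoot ζ k) (ℓ : ℤ) :
    ∃ a : ℤ, 0 ≤ a ∧ 2 * a ≤ k ∧ rEigPair r ζ ℓ = rEigPair r ζ a := by
  have hk' : (k : ℤ) ≠ 0 := by exact_mod_cast hk
  have hmod : rEigPair r ζ ℓ = rEigPair r ζ (ℓ % k) :=
    rEigPair_congr r hk hζ ⟨ℓ / k, by rw [Int.emod_def]; ring⟩
  have h0 := Int.emod_nonneg ℓ hk'
  have hlt := Int.emod_lt_of_pos ℓ (by omega : (0 : ℤ) < k)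
  by_cases h2 : 2 * (ℓ % k) ≤ k
  · exact ⟨ℓ % k, h0, h2, hmod⟩
  · refine ⟨k - ℓ % k, by omega, by omega, ?_⟩
    rw [hmod, ← rEigPair_neg r ζ (k - ℓ % k)]
    exact rEigPair_congr r hk hζ ⟨1, by ring⟩

theorem dvd_sub_or_dvd_add_of_mem_rEigPair (hk : k ≠ 0) (hζ : IsPrimitiveRoot ζ k) {p : E}
    (hp0 : p ≠ 0) {a b : ℤ} (ha : p ∈ rEigPair r ζ a) (hb : p ∈ rEigPair r ζ b) :
    (k : ℤ) ∣ a - b ∨ (k : ℤ) ∣ a + b := by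
  by_contra! ⟨hsub, hadd⟩
  have hne : ∀ x y : ℤ, ¬ (k : ℤ) ∣ x - y → ζ ^ x ≠ ζ ^ y := fun x y hxy hζxy =>
    hxy ((hζ.zpow_eq_zpow_iff hk x y).mp hζxy)
  have hdisj : Disjoint ({ζ ^ a, ζ ^ (-a)} : Set ℂ) {ζ ^ b, ζ ^ (-b)} := by
    simp only [Set.disjoint_insert_left, Set.disjoint_insert_right, Set.disjoint_singleton,
      Set.mem_insert_iff, Set.mem_singleton_iff, not_or]
    exact ⟨⟨hne _ _ (by rwa [dvd_sub_comm]), hne _ _ (by rwa [sub_neg_eq_add, add_comm])⟩,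
      hne _ _ (by rwa [sub_neg_eq_add]), hne _ _ (by rwa [neg_sub_neg, dvd_sub_comm])⟩
  rw [rEigPair_eq_eigenspace_sup, ← zpow_neg] at ha hb
  exact hp0 (Submodule.disjoint_def.mp (r.disjoint_eigenspace_sup_eigenspace hdisj) p ha hb)

theorem mem_rEigPair_iff (hk : k ≠ 0) (hζ : IsPrimitiveRoot ζ k) {p : E} (hp0 : p ≠ 0)
    {a b : ℤ} (hpa : p ∈ rEigPair r ζ a) (ha0 : 0 ≤ a) (hak : 2 * a ≤ k) (hb0 : 0 ≤ b)
    (hbk : 2 * b ≤ k) : p ∈ rEigPair r ζ b ↔ b = a :=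
  ⟨fun hpb => Int.eq_of_dvd_sub_or_dvd_add hb0 hbk ha0 hak
    (dvd_sub_or_dvd_add_of_mem_rEigPair r hk hζ hp0 hpb hpa), fun h => h ▸ hpa⟩

theorem exists_mem_rEigPair (hk : k ≠ 0) (hζ : IsPrimitiveRoot ζ k) {wm wp : Module.End ℂ E}
    (hm : wm * wm = 1) (hp : wp * wp = 1) (hord : (wp * wm) ^ k = 1) {p : E} (hp0 : p ≠ 0)
    (hpeig : wp p = -p) (hspan : ∀ x, wp x = -x → ∃ c : ℂ, x = c • p) :
    ∃ a : ℤ, 0 ≤ a ∧ 2 * a ≤ k ∧ p ∈ rEigPair (wp * wm) ζ a := by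
  obtain ⟨μ, hμ, hpμ⟩ := Module.End.exists_mem_eigenspace_sup_eigenspace_inv hm hp
    (S := nthRootsFinset k (1 : ℂ))
    (by rw [Module.End.iSup_eigenspace_nthRootsFinset_eq_top hk hζ hord]; trivial)
    hp0 hpeig hspan
  have : NeZero k := ⟨hk⟩
  obtain ⟨i, -, rfl⟩ := hζ.eq_pow_of_pow_eq_one
    ((mem_nthRootsFinset (Nat.pos_of_ne_zero hk) 1).mp hμ)
  obtain ⟨a, ha0, hak, hia⟩ := exists_rEigPair_eq (wp * wm) hk hζ i
  refine ⟨a, ha0, hak, hia ▸ ?_⟩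
  rwa [rEigPair_eq_eigenspace_sup, zpow_natCast]

end rEig

/-- With `k ≥ 1`, `E` a complex vector space, `wm, wp`
("w₋", "w₊") linear involutions with `(wp ∘ wm)^k = id`, `r = wp ∘ wm`,
`ζ = e^{2πi/k}` and `E_ℓ` the `ζ^ℓ`-eigenspace of `r`: if `p ≠ 0` satisfies
`w₊ p = -p` and spans the full `(-1)`-eigenspace of `w₊`, then exactly one of
the following holds: `p ∈ E_0`; or `k` is even and `p ∈ E_{k/2}`; or there is
an integer `ℓ` with `0 < ℓ < k/2` and `p ∈ E_ℓ + E_{-ℓ}`. -/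
theorem stmt5 (k : ℕ) (hk : 1 ≤ k)
    {E : Type*} [AddCommGroup E] [Module ℂ E]
    (wm wp : E →ₗ[ℂ] E)
    (hm : wm * wm = 1) (hp : wp * wp = 1)
    (hord : (wp * wm) ^ k = 1)
    (ζ : ℂ) (hζ : ζ = Complex.exp (2 * Real.pi * Complex.I / k))
    (p : E) (hp0 : p ≠ 0) (hpeig : wp p = -p)
    (hspan : {x : E | wp x = -x} = {x : E | ∃ c : ℂ, x = c • p}) :
    (p ∈ rEig (wp * wm) ζ 0 ∧
      ¬(Even k ∧ p ∈ rEig (wp * wm) ζ ((k : ℤ) / 2)) ∧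
      ¬(∃ ℓ : ℤ, 0 < ℓ ∧ 2 * ℓ < (k : ℤ) ∧
          p ∈ rEig (wp * wm) ζ ℓ ⊔ rEig (wp * wm) ζ (-ℓ))) ∨
    (¬(p ∈ rEig (wp * wm) ζ 0) ∧
      (Even k ∧ p ∈ rEig (wp * wm) ζ ((k : ℤ) / 2)) ∧
      ¬(∃ ℓ : ℤ, 0 < ℓ ∧ 2 * ℓ < (k : ℤ) ∧
          p ∈ rEig (wp * wm) ζ ℓ ⊔ rEig (wp * wm) ζ (-ℓ))) ∨
    (¬(p ∈ rEig (wp * wm) ζ 0) ∧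
      ¬(Even k ∧ p ∈ rEig (wp * wm) ζ ((k : ℤ) / 2)) ∧
      (∃ ℓ : ℤ, 0 < ℓ ∧ 2 * ℓ < (k : ℤ) ∧
          p ∈ rEig (wp * wm) ζ ℓ ⊔ rEig (wp * wm) ζ (-ℓ))) := by
  have hk0 : k ≠ 0 := by omega
  have hζk : IsPrimitiveRoot ζ k := hζ ▸ Complex.isPrimitiveRoot_exp k hk0
  obtain ⟨a, ha0, hak, hpa⟩ := exists_mem_rEigPair hk0 hζk hm hp hord hp0 hpeig
    fun x hx => (hspan ▸ hx : x ∈ {x : E | ∃ c : ℂ, x = c • p})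
  have hiff := fun b => mem_rEigPair_iff (wp * wm) hk0 hζk hp0 hpa ha0 hak (b := b)
  have hzero : p ∈ rEig (wp * wm) ζ 0 ↔ a = 0 := by
    rw [← rEigPair_eq_rEig _ hk0 hζk (by simp), hiff 0 le_rfl (by omega), eq_comm]
  have hhalf : (Even k ∧ p ∈ rEig (wp * wm) ζ ((k : ℤ) / 2)) ↔ 2 * a = k := by
    constructor
    · rintro ⟨⟨t, rfl⟩, hpt⟩
      rw [← rEigPair_eq_rEig _ hk0 hζk ⟨1, by omega⟩, hiff _ (by omega) (by omega)] at hpt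
      omega
    · intro h
      refine ⟨⟨a.toNat, by omega⟩, ?_⟩
      rwa [← rEigPair_eq_rEig _ hk0 hζk ⟨1, by omega⟩, show (k : ℤ) / 2 = a by omega]
  have hmid : (∃ ℓ : ℤ, 0 < ℓ ∧ 2 * ℓ < (k : ℤ) ∧
      p ∈ rEig (wp * wm) ζ ℓ ⊔ rEig (wp * wm) ζ (-ℓ)) ↔ 0 < a ∧ 2 * a < k := by
    constructor
    · rintro ⟨ℓ, hℓ0, hℓk, hpℓ⟩
      obtain rfl := (hiff ℓ hℓ0.le hℓk.le).mp hpℓ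
      exact ⟨hℓ0, hℓk⟩
    · rintro ⟨hpos, hlt⟩
      exact ⟨a, hpos, hlt, hpa⟩
  rw [hzero, hhalf, hmid]
  omega
end

section
/- Let V be a finite-dimensional real vector space and let Γ ⊆ Υ be finite subgroups of the general linear group GL(V). If every Γ-invariant polynomial function on V is also Υ-invariant (equivalently, if the invariant rings ℝ[V]^Γ and ℝ[V]^Υ coincide), then Γ = Υ. -/
/-!
If `g ∈ Υ` were not in `Γ`, then, since a real vector space is not a finite union of proper
subspaces, some `v` has `γ (g v) ≠ v` for every `γ ∈ Γ`: the `Γ`-orbits of `v` and `g v` are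
disjoint. The polynomial `w ↦ ∏_{γ ∈ Γ} ‖γ w - v‖²` (squared norm in the coordinates of the basis)
is `Γ`-invariant and vanishes exactly on the orbit `Γ v`, so it separates `v` from `g v`, and
therefore is not `g`-invariant.
-/

open MvPolynomial

namespace Module.Basis

section CommRing

variable {ι R V : Type*} [CommRing R] [AddCommGroup V] [Module R V]

noncomputable def polynomialFunctions (b : Basis ι R V) : Subalgebra R (V → R) :=
  (aeval fun i v => b.repr v i).range

theorem exists_eval_eq_of_mem_polynomialFunctions {b : Basis ι R V} {f : V → R}
    (hf : f ∈ b.polynomialFunctions) :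
    ∃ P : MvPolynomial ι R, ∀ v, f v = eval (fun i => b.repr v i) P := by
  obtain ⟨P, rfl⟩ := hf
  refine ⟨P, fun v => ?_⟩
  rw [← coe_aeval_eq_eval]
  exact DFunLike.congr_fun (comp_aeval _ (Pi.evalAlgHom R (fun _ => R) v)) P

theorem dual_mem_polynomialFunctions [Fintype ι] (b : Basis ι R V) (ℓ : Dual R V) :
    ⇑ℓ ∈ b.polynomialFunctions := by
  rw [← b.sum_dual_apply_smul_coord ℓ, LinearMap.coe_sum]
  exact Subalgebra.sum_mem _ fun i _ =>
    Subalgebra.smul_mem _ ((AlgHom.mem_range _).2 ⟨X i, by ext; simp⟩) _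

end CommRing

theorem sum_sq_repr_eq_zero_iff {ι R V : Type*} [Fintype ι] [CommRing R] [LinearOrder R]
    [IsStrictOrderedRing R] [AddCommGroup V] [Module R V] (b : Basis ι R V) {x : V} :
    ∑ j, b.repr x j ^ 2 = 0 ↔ x = 0 := by
  simp [Finset.sum_eq_zero_iff_of_nonneg fun j _ => sq_nonneg (b.repr x j),
    ← b.forall_coord_eq_zero_iff]

end Module.Basis

section InfiniteField

variable {K V : Type*} [Field K] [Infinite K] [AddCommGroup V] [Module K V]

theorem LinearMap.exists_forall_apply_ne_self {ι : Type*} [Finite ι] {f : ι → V →ₗ[K] V}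
    (hf : ∀ i, f i ≠ LinearMap.id) : ∃ v, ∀ i, f i v ≠ v := by
  by_contra! h
  obtain ⟨i, hi⟩ := Subspace.exists_eq_top_of_iUnion_eq_univ
    (p := fun i => LinearMap.eqLocus (f i) LinearMap.id) <| Set.eq_univ_of_forall fun v => by
      simpa using h v
  exact hf i (LinearMap.eqLocus_eq_top.1 hi)

theorem Subgroup.exists_forall_mem_apply_ne_of_notMem {Γ : Subgroup (V ≃ₗ[K] V)} [Finite Γ]
    {g : V ≃ₗ[K] V} (hg : g ∉ Γ) : ∃ v, ∀ γ ∈ Γ, γ (g v) ≠ v := by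
  have hne (γ : Γ) : ((γ : V ≃ₗ[K] V) * g).toLinearMap ≠ LinearMap.id := fun hγ => hg <| by
    rw [eq_inv_of_mul_eq_one_right (LinearEquiv.toLinearMap_injective hγ :
      (γ : V ≃ₗ[K] V) * g = 1)]
    exact Γ.inv_mem γ.2
  obtain ⟨v, hv⟩ := LinearMap.exists_forall_apply_ne_self hne
  exact ⟨v, fun γ hγ => hv ⟨γ, hγ⟩⟩

end InfiniteField

namespace Subgroup

variable {ι R V : Type*} [Fintype ι] [CommRing R] [AddCommGroup V] [Module R V]
  (Γ : Subgroup (V ≃ₗ[R] V)) [Fintype Γ] (b : Module.Basis ι R V) (v : V)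

noncomputable def orbitDistProd (w : V) : R :=
  ∏ γ : Γ, ∑ j, b.repr ((γ : V ≃ₗ[R] V) w - v) j ^ 2

theorem orbitDistProd_mem_polynomialFunctions :
    Γ.orbitDistProd b v ∈ b.polynomialFunctions := by
  have hcoord (γ : V ≃ₗ[R] V) (j : ι) :
      (fun w => b.repr (γ w - v) j) ∈ b.polynomialFunctions := by
    have : (fun w => b.repr (γ w - v) j) =
        ⇑(b.coord j ∘ₗ γ.toLinearMap) - algebraMap R (V → R) (b.repr v j) := by
      ext; simp
    exact this ▸ sub_mem (b.dual_mem_polynomialFunctions _) (algebraMap_mem _ _)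
  have : Γ.orbitDistProd b v =
      ∏ γ : Γ, ∑ j, (fun w => b.repr ((γ : V ≃ₗ[R] V) w - v) j) ^ 2 := by
    ext; simp [orbitDistProd]
  rw [this]
  exact prod_mem fun γ _ => sum_mem fun j _ => pow_mem (hcoord γ j) 2

theorem orbitDistProd_apply_of_mem {δ : V ≃ₗ[R] V} (hδ : δ ∈ Γ) (w : V) :
    Γ.orbitDistProd b v (δ w) = Γ.orbitDistProd b v w :=
  Fintype.prod_equiv (Equiv.mulRight ⟨δ, hδ⟩) _ _ fun _ => by simp

theorem orbitDistProd_eq_zero_iff [LinearOrder R] [IsStrictOrderedRing R] {w : V} :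
    Γ.orbitDistProd b v w = 0 ↔ ∃ γ ∈ Γ, γ w = v := by
  simp only [orbitDistProd, Finset.prod_eq_zero_iff, Finset.mem_univ, true_and,
    b.sum_sq_repr_eq_zero_iff, sub_eq_zero, Subtype.exists, exists_prop]

end Subgroup

theorem stmt6_general {V : Type*} [AddCommGroup V] [Module ℝ V]
    {ι : Type*} [Fintype ι] (b : Module.Basis ι ℝ V)
    (Γ Υ : Subgroup (V ≃ₗ[ℝ] V)) [Finite Γ] (hΓΥ : Γ ≤ Υ)
    (hinv : ∀ P : MvPolynomial ι ℝ,
      (∀ g ∈ Γ, ∀ v : V,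
        MvPolynomial.eval (fun i => b.repr (g v) i) P =
          MvPolynomial.eval (fun i => b.repr v i) P) →
      (∀ g ∈ Υ, ∀ v : V,
        MvPolynomial.eval (fun i => b.repr (g v) i) P =
          MvPolynomial.eval (fun i => b.repr v i) P)) :
    Γ = Υ := by
  have := Fintype.ofFinite Γ
  refine le_antisymm hΓΥ fun g hg => ?_
  by_contra hgΓ
  obtain ⟨v, hv⟩ := Subgroup.exists_forall_mem_apply_ne_of_notMem hgΓ
  obtain ⟨P, hP⟩ := Module.Basis.exists_eval_eq_of_mem_polynomialFunctions
    (Γ.orbitDistProd_mem_polynomialFunctions b v)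
  have hPΓ : ∀ γ ∈ Γ, ∀ w : V,
      eval (fun i => b.repr (γ w) i) P = eval (fun i => b.repr w i) P := by
    intro γ hγ w
    rw [← hP, ← hP, Γ.orbitDistProd_apply_of_mem b v hγ]
  have hgv := hinv P hPΓ g hg v
  rw [← hP, ← hP, (Γ.orbitDistProd_eq_zero_iff b v).2 ⟨1, Γ.one_mem, rfl⟩,
    Γ.orbitDistProd_eq_zero_iff] at hgv
  obtain ⟨γ, hγ, hγgv⟩ := hgv
  exact hv γ hγ hγgv

/-- Let `V` be a finite-dimensional real vector space
(with a basis `b` indexed by a finite type `ι`) and let `Γ ⊆ Υ` be finite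
subgroups of `GL(V)`.  If every `Γ`-invariant polynomial function on `V`
(i.e. every `P ∈ ℝ[V] = MvPolynomial ι ℝ`, viewed as the function
`v ↦ P(coordinates of v)`, invariant under every element of `Γ`) is also
`Υ`-invariant, then `Γ = Υ`. -/
theorem stmt6 {V : Type*} [AddCommGroup V] [Module ℝ V] [FiniteDimensional ℝ V]
    {ι : Type*} [Fintype ι] (b : Module.Basis ι ℝ V)
    (Γ Υ : Subgroup (V ≃ₗ[ℝ] V)) [Finite Γ] [Finite Υ] (hΓΥ : Γ ≤ Υ)
    (hinv : ∀ P : MvPolynomial ι ℝ,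
      (∀ g ∈ Γ, ∀ v : V,
        MvPolynomial.eval (fun i => b.repr (g v) i) P =
          MvPolynomial.eval (fun i => b.repr v i) P) →
      (∀ g ∈ Υ, ∀ v : V,
        MvPolynomial.eval (fun i => b.repr (g v) i) P =
          MvPolynomial.eval (fun i => b.repr v i) P)) :
    Γ = Υ :=
  stmt6_general b Γ Υ hΓΥ hinv
end

section
/- Let A be a commutative integral domain of characteristic different from 2, and let w₋, w₊ be commuting ring automorphisms of A with w₋² = w₊² = id, with fixed subrings F₋ = A^{w₋} and F₊ = A^{w₊}. Suppose there are elements p₋, p₊ ∈ A with w₊(p₊) = −p₊, w₋(p₊) = p₊, w₋(p₋) = −p₋, w₊(p₋) = p₋, and such that A = F₊ ⊕ p₊F₊ and A = F₋ ⊕ p₋F₋ as modules. Then the joint (−1)-eigenspace satisfies {x ∈ A : w₊(x) = −x and w₋(x) = −x} = p₊p₋ · (F₊ ∩ F₋). -/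
/-- The fixed subring `{a ∈ A | w a = a}` of a ring automorphism `w`. -/
def fixedSubring {A : Type*} [CommRing A] (w : A ≃+* A) : Subring A where
  carrier := {a : A | w a = a}
  mul_mem' := by
    intro a b ha hb
    simp only [Set.mem_setOf_eq] at *
    rw [map_mul, ha, hb]
  one_mem' := by simp
  add_mem' := by
    intro a b ha hb
    simp only [Set.mem_setOf_eq] at *
    rw [map_add, ha, hb]
  zero_mem' := by simp
  neg_mem' := by
    intro a ha
    simp only [Set.mem_setOf_eq] at *
    rw [map_neg, ha]

/-- Let `A` be a commutative integral domain of characteristic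
different from `2` (i.e. `2 ≠ 0` in `A`), and `wm, wp` ("w₋", "w₊") commuting
ring involutions of `A` with fixed subrings `F₋, F₊`.  Suppose `pm, pp ∈ A`
("p₋", "p₊") satisfy `w₊ p₊ = -p₊`, `w₋ p₊ = p₊`, `w₋ p₋ = -p₋`, `w₊ p₋ = p₋`,
and `A = F₊ ⊕ p₊F₊`, `A = F₋ ⊕ p₋F₋`.  Then the joint `(-1)`-eigenspace
`{x | w₊ x = -x and w₋ x = -x}` equals `p₊p₋ · (F₊ ∩ F₋)`. -/
theorem stmt9 {A : Type*} [CommRing A] [IsDomain A] (h2 : (2 : A) ≠ 0)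
    (wm wp : A ≃+* A)
    (hcomm : ∀ a, wm (wp a) = wp (wm a))
    (hm : ∀ a, wm (wm a) = a) (hp : ∀ a, wp (wp a) = a)
    (pm pp : A)
    (hpp1 : wp pp = -pp) (hpp2 : wm pp = pp)
    (hpm1 : wm pm = -pm) (hpm2 : wp pm = pm)
    (hdp : ∀ a : A, ∃! bc : fixedSubring wp × fixedSubring wp,
      a = (bc.1 : A) + pp * (bc.2 : A))
    (hdm : ∀ a : A, ∃! bc : fixedSubring wm × fixedSubring wm,
      a = (bc.1 : A) + pm * (bc.2 : A)) :
    ∀ x : A, (wp x = -x ∧ wm x = -x) ↔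
      ∃ c : A, c ∈ fixedSubring wp ∧ c ∈ fixedSubring wm ∧ x = pp * pm * c := by
  have two_cancel : ∀ a : A, 2 * a = 0 → a = 0 := by
    intro a h
    rcases mul_eq_zero.mp h with h | h
    · exact absurd h h2
    · exact h
  intro x
  constructor
  · rintro ⟨hx1, hx2⟩
    obtain ⟨⟨b, c⟩, hbc, -⟩ := hdp x
    have hb : wp (b : A) = b := b.2
    have hc : wp (c : A) = c := c.2
    have hb0 : (b : A) = 0 := by
      apply two_cancel
      have h1 : wp x = (b : A) - pp * c := by
        rw [hbc, map_add, map_mul, hb, hc, hpp1]; ring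
      rw [hbc] at hx1 h1
      linear_combination hx1 - h1
    have hx : x = pp * c := by rw [hbc, hb0, zero_add]
    have hmc : pp * (wm (c : A) + c) = 0 := by
      have h2' := hx2
      rw [hx, map_mul, hpp2] at h2'
      linear_combination h2'
    rcases mul_eq_zero.mp hmc with hpp0 | hsum
    · exact ⟨0, Subring.zero_mem _, Subring.zero_mem _, by rw [hx, hpp0]; ring⟩
    have hmc' : wm (c : A) = -c := eq_neg_of_add_eq_zero_left hsum
    obtain ⟨⟨d, e⟩, hde, -⟩ := hdm (c : A)
    have hd : wm (d : A) = d := d.2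
    have he : wm (e : A) = e := e.2
    have hd0 : (d : A) = 0 := by
      apply two_cancel
      have h1 : wm (c : A) = (d : A) - pm * e := by
        rw [hde, map_add, map_mul, hd, he, hpm1]; ring
      rw [hmc'] at h1
      linear_combination -h1 - hde
    have hce : (c : A) = pm * e := by rw [hde, hd0, zero_add]
    have hpe : pm * (wp (e : A) - e) = 0 := by
      have h1 := hc
      rw [hce, map_mul, hpm2] at h1
      linear_combination h1
    rcases mul_eq_zero.mp hpe with hpm0 | hdiff
    · exact ⟨0, Subring.zero_mem _, Subring.zero_mem _, by
        rw [hx, hce, hpm0]; ring⟩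
    · have hpe' : wp (e : A) = e := by linear_combination hdiff
      exact ⟨e, hpe', he, by rw [hx, hce]; ring⟩
  · rintro ⟨c, hc1, hc2, rfl⟩
    have hc1' : wp c = c := hc1
    have hc2' : wm c = c := hc2
    constructor
    · rw [map_mul, map_mul, hpp1, hpm2, hc1']; ring
    · rw [map_mul, map_mul, hpp2, hpm1, hc2']; ring
end

section
/- Exactly one of the following three cases holds: (i) k = 1, n₊ = n₋, and p₊ = λp₋ for some nonzero scalar λ ∈ ℂ; (ii) k = 2 and r p₊ = −p₊ and r p₋ = −p₋ (i.e., p₊, p₋ ∈ E_1); (iii) k ≥ 2, n₊ = n₋ =: n, and there exist an integer j with 0 < j < k/2 and gcd(j,k) = 1 and an element q ∈ E_j ∩ E^{2n} such that, after rescaling p₊ and p₋ by nonzero complex scalars, p₊ = q − w₊(q) and p₋ = q − w₋(q); moreover in this case dim_ℂ(E_j ∩ E^{2n}) = dim_ℂ(E_{−j} ∩ E^{2n}) = 1. -/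
/-- Case (i) of the trichotomy: `k = 1`, `n₊ = n₋`, and `p₊` is a nonzero
scalar multiple of `p₋`. -/
def TrichotomyCase1 {E : Type*} [AddCommGroup E] [Module ℂ E]
    (k nm np : ℕ) (pm pp : E) : Prop :=
  k = 1 ∧ np = nm ∧ ∃ c : ℂ, c ≠ 0 ∧ pp = c • pm

/-- Case (ii) of the trichotomy: `k = 2` and `r p₊ = -p₊`, `r p₋ = -p₋`
(i.e. `p₊, p₋ ∈ E_1`), where `r = w₊ w₋`. -/
def TrichotomyCase2 {E : Type*} [CommRing E] [Algebra ℂ E]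
    (k : ℕ) (wm wp : E ≃ₐ[ℂ] E) (pm pp : E) : Prop :=
  k = 2 ∧ wp (wm pp) = -pp ∧ wp (wm pm) = -pm

/-- Case (iii) of the trichotomy: `k ≥ 2`, `n₊ = n₋ = n`, and there are an
integer `j` with `0 < j < k/2`, `gcd(j,k) = 1`, and `q ∈ E_j ∩ E^{2n}` such
that after rescaling by nonzero scalars `p₊ = q - w₊ q` and `p₋ = q - w₋ q`;
moreover `dim_ℂ (E_j ∩ E^{2n}) = dim_ℂ (E_{-j} ∩ E^{2n}) = 1`. -/
def TrichotomyCase3 {E : Type*} [CommRing E] [Algebra ℂ E]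
    (𝒜 : ℕ → Submodule ℂ E) (k nm np : ℕ) (ζ : ℂ)
    (wm wp : E ≃ₐ[ℂ] E) (pm pp : E) : Prop :=
  2 ≤ k ∧ np = nm ∧
  ∃ j : ℕ, 0 < j ∧ 2 * j < k ∧ Nat.gcd j k = 1 ∧
    ∃ (q : E) (cp cm : ℂ),
      q ∈ 𝒜 (2 * np) ∧
      q ∈ rEig (wp * wm : E ≃ₐ[ℂ] E).toLinearMap ζ (j : ℤ) ∧
      cp ≠ 0 ∧ cm ≠ 0 ∧
      cp • pp = q - wp q ∧ cm • pm = q - wm q ∧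
      Module.rank ℂ
        ↥(rEig (wp * wm : E ≃ₐ[ℂ] E).toLinearMap ζ (j : ℤ) ⊓ 𝒜 (2 * np)) = 1 ∧
      Module.rank ℂ
        ↥(rEig (wp * wm : E ≃ₐ[ℂ] E).toLinearMap ζ (-(j : ℤ)) ⊓ 𝒜 (2 * np)) = 1

open Module.End

lemma pow_val_add {G : Type*} [Monoid G] {k : ℕ} [NeZero k] {a : G} (ha : a ^ k = 1)
    (s t : ZMod k) : a ^ (s + t).val = a ^ s.val * a ^ t.val := by
  rw [ZMod.val_add, ← pow_eq_pow_mod _ ha, pow_add]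

namespace Module.End

variable {M : Type*} [AddCommGroup M] [Module ℂ M] {f g : Module.End ℂ M}

lemma pow_apply_of_mem_eigenspace {μ : ℂ} {z : M} (hz : z ∈ f.eigenspace μ) (n : ℕ) :
    (f ^ n) z = μ ^ n • z := by
  induction n with
  | zero => simp
  | succ n ih =>
    rw [pow_succ', Module.End.mul_apply, ih, map_smul, mem_eigenspace_iff.mp hz, smul_smul,
      pow_succ]

lemma map_mem_eigenspace_neg {A : Type*} [AddGroup A] {ψ : AddChar A ℂ} (hfg : f * g * f = g)
    {t : A} {z : M} (hz : z ∈ f.eigenspace (ψ t)) : g z ∈ f.eigenspace (ψ (-t)) := by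
  rw [mem_eigenspace_iff] at hz ⊢
  calc f (g z) = (ψ (-t) * ψ t) • f (g z) := by
        rw [← AddChar.map_add_eq_mul, neg_add_cancel, AddChar.map_zero_eq_one, one_smul]
    _ = ψ (-t) • (f * g * f) z := by simp [hz, mul_smul]
    _ = ψ (-t) • g z := by rw [hfg]

variable {k : ℕ} [NeZero k]

/-- For `f ^ k = 1` and `ψ` primitive, the projection onto the `ψ t`-eigenspace of `f` along the
other eigenspaces. -/
noncomputable def eigenProj (ψ : AddChar (ZMod k) ℂ) (f : Module.End ℂ M) (t : ZMod k) :
    Module.End ℂ M :=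
  (k : ℂ)⁻¹ • ∑ s : ZMod k, ψ (-(s * t)) • f ^ s.val

def eigenSupport (ψ : AddChar (ZMod k) ℂ) (f : Module.End ℂ M) (x : M) : Set (ZMod k) :=
  {t | eigenProj ψ f t x ≠ 0}

variable {ψ : AddChar (ZMod k) ℂ}

lemma mem_eigenSupport {x : M} {t : ZMod k} :
    t ∈ eigenSupport ψ f x ↔ eigenProj ψ f t x ≠ 0 :=
  Iff.rfl

lemma eigenProj_apply (t : ZMod k) (x : M) :
    eigenProj ψ f t x = (k : ℂ)⁻¹ • ∑ s : ZMod k, ψ (-(s * t)) • (f ^ s.val) x := by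
  simp [eigenProj, LinearMap.sum_apply]

lemma eigenProj_apply_of_mem_eigenspace (hψ : ψ.IsPrimitive) {u : ZMod k} {z : M}
    (hz : z ∈ f.eigenspace (ψ u)) (t : ZMod k) :
    eigenProj ψ f t z = if u = t then z else 0 := by
  have hterm (s : ZMod k) : ψ (-(s * t)) • (f ^ s.val) z = ψ (s * (u - t)) • z := by
    rw [pow_apply_of_mem_eigenspace hz, ← AddChar.map_nsmul_eq_pow, nsmul_eq_mul,
      ZMod.natCast_zmod_val, smul_smul, ← AddChar.map_add_eq_mul]
    ring_nf
  rw [eigenProj_apply, Finset.sum_congr rfl fun s _ => hterm s, ← Finset.sum_smul,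
    AddChar.sum_mulShift _ hψ]
  by_cases h : u = t <;> simp [h, sub_eq_zero, ZMod.card, NeZero.ne]

lemma sum_eigenProj_apply (hψ : ψ.IsPrimitive) (x : M) : ∑ t, eigenProj ψ f t x = x := by
  have hchar (s : ZMod k) : ∑ t : ZMod k, ψ (-(s * t)) = if s = 0 then (k : ℂ) else 0 := by
    simp_rw [show ∀ t, -(s * t) = t * -s from fun t => by ring]
    rw [AddChar.sum_mulShift _ hψ]
    by_cases h : s = 0 <;> simp [h, ZMod.card]
  simp_rw [eigenProj_apply, ← Finset.smul_sum]
  rw [Finset.sum_comm]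
  simp_rw [← Finset.sum_smul, hchar, ite_smul, zero_smul,
    Finset.sum_ite_eq' Finset.univ (0 : ZMod k)]
  simp [NeZero.ne]

lemma eigenProj_apply_mem_eigenspace (hf : f ^ k = 1) (t : ZMod k) (x : M) :
    eigenProj ψ f t x ∈ f.eigenspace (ψ t) := by
  have hshift (s : ZMod k) : f ((f ^ s.val) x) = (f ^ (s + 1).val) x := by
    rw [pow_val_add hf, ZMod.val_one_eq_one_mod, ← pow_eq_pow_mod _ hf, pow_one,
      ← Module.End.mul_apply, ← pow_succ', pow_succ]
  rw [mem_eigenspace_iff, eigenProj_apply, map_smul, map_sum, smul_comm (ψ t)]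
  congr 1
  rw [Finset.smul_sum]
  refine Fintype.sum_equiv (Equiv.addRight (1 : ZMod k)) _ _ fun s => ?_
  rw [Equiv.coe_addRight, map_smul, hshift, smul_smul, ← AddChar.map_add_eq_mul]
  congr 2
  ring

lemma eigenProj_eigenProj (hψ : ψ.IsPrimitive) (hf : f ^ k = 1) (t u : ZMod k) (x : M) :
    eigenProj ψ f u (eigenProj ψ f t x) = if t = u then eigenProj ψ f t x else 0 :=
  eigenProj_apply_of_mem_eigenspace hψ (eigenProj_apply_mem_eigenspace hf t x) u

lemma eigenProj_apply_mem {N : Submodule ℂ M} (hN : ∀ x ∈ N, f x ∈ N) (t : ZMod k) {x : M}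
    (hx : x ∈ N) : eigenProj ψ f t x ∈ N := by
  rw [eigenProj_apply]
  exact N.smul_mem _ (N.sum_mem fun s _ => N.smul_mem _ (pow_apply_mem_of_forall_mem _ hN x hx))

lemma map_eigenProj (hψ : ψ.IsPrimitive) (hf : f ^ k = 1) (hfg : f * g * f = g) (t : ZMod k)
    (x : M) : g (eigenProj ψ f t x) = eigenProj ψ f (-t) (g x) := by
  conv_rhs => rw [← sum_eigenProj_apply (f := f) hψ x, map_sum, map_sum]
  simp_rw [eigenProj_apply_of_mem_eigenspace hψ
    (map_mem_eigenspace_neg hfg (eigenProj_apply_mem_eigenspace hf _ x)), neg_inj]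
  simp

end Module.End

section EigenAlgebra

variable {E : Type*} [CommRing E] [Algebra ℂ E] {R : E ≃ₐ[ℂ] E}

lemma mul_mem_eigenspace {A : Type*} [AddMonoid A] {ψ : AddChar A ℂ} {s t : A} {x y : E}
    (hx : x ∈ eigenspace R.toLinearMap (ψ s)) (hy : y ∈ eigenspace R.toLinearMap (ψ t)) :
    x * y ∈ eigenspace R.toLinearMap (ψ (s + t)) := by
  rw [mem_eigenspace_iff, AlgEquiv.toLinearMap_apply] at hx hy ⊢
  rw [map_mul, hx, hy, AddChar.map_add_eq_mul, smul_mul_smul_comm]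

variable {k : ℕ} [NeZero k] {ψ : AddChar (ZMod k) ℂ}

lemma eigenProj_mul (hψ : ψ.IsPrimitive) (hR : R.toLinearMap ^ k = 1) (t : ZMod k) (x y : E) :
    eigenProj ψ R.toLinearMap t (x * y) =
      ∑ s, eigenProj ψ R.toLinearMap s x * eigenProj ψ R.toLinearMap (t - s) y := by
  conv_lhs => rw [← sum_eigenProj_apply (f := R.toLinearMap) hψ x,
    ← sum_eigenProj_apply (f := R.toLinearMap) hψ y, Finset.sum_mul_sum, map_sum]
  refine Finset.sum_congr rfl fun s _ => ?_
  simp_rw [map_sum, eigenProj_apply_of_mem_eigenspace hψ (mul_mem_eigenspace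
    (eigenProj_apply_mem_eigenspace hR s x) (eigenProj_apply_mem_eigenspace hR _ y)),
    ← eq_sub_iff_add_eq']
  simp

end EigenAlgebra

section AntiGenerator

variable {E : Type*} [CommRing E] [Algebra ℂ E] (𝒜 : ℕ → Submodule ℂ E)

/-- The last field says `E = E^w ⊕ p E^w`. -/
structure IsAntiGenerator (w : E ≃ₐ[ℂ] E) (p : E) (D : ℕ) : Prop where
  mem : p ∈ 𝒜 D
  map_eq_neg : w p = -p
  existsUnique : ∀ a : E, ∃! bc : E × E, (w bc.1 = bc.1 ∧ w bc.2 = bc.2) ∧ a = bc.1 + p * bc.2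

namespace IsAntiGenerator

variable {𝒜} {w : E ≃ₐ[ℂ] E} {p : E} {D : ℕ}

lemma ne_zero [Nontrivial E] (g : IsAntiGenerator 𝒜 w p D) : p ≠ 0 := by
  rintro rfl
  obtain ⟨_, _, huniq⟩ := g.existsUnique 1
  have h₁ := huniq (1, 0) ⟨⟨map_one w, map_zero w⟩, by simp⟩
  have h₂ := huniq (1, 1) ⟨⟨map_one w, map_one w⟩, by simp⟩
  exact zero_ne_one (congrArg Prod.snd (h₁.trans h₂.symm))

lemma exists_eq_mul (g : IsAntiGenerator 𝒜 w p D) {x : E} (hx : w x = -x) : ∃ c, x = p * c := by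
  obtain ⟨⟨b, c⟩, ⟨⟨hb, hc⟩, hxe⟩, -⟩ := g.existsUnique x
  have hwx : w x = b - p * c := by
    rw [hxe, map_add, map_mul, hb, hc, g.map_eq_neg]
    ring
  have hb0 : (2 : ℂ) • b = 0 := by
    rw [two_smul]
    linear_combination hx - hwx - hxe
  refine ⟨c, ?_⟩
  rw [hxe, (smul_eq_zero_iff_right two_ne_zero).mp hb0, zero_add]

variable [GradedAlgebra 𝒜]

lemma exists_mem_eq_mul (g : IsAntiGenerator 𝒜 w p D) {x : E} {e : ℕ} (hx : x ∈ 𝒜 e)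
    (hx0 : x ≠ 0) (hxw : w x = -x) : D ≤ e ∧ ∃ c ∈ 𝒜 (e - D), x = p * c := by
  obtain ⟨c, rfl⟩ := g.exists_eq_mul hxw
  have hdecomp := DirectSum.decompose_of_mem_same 𝒜 hx
  by_cases hDe : D ≤ e
  · rw [DirectSum.coe_decompose_mul_of_left_mem_of_le 𝒜 g.mem hDe] at hdecomp
    exact ⟨hDe, _, SetLike.coe_mem _, hdecomp.symm⟩
  · rw [DirectSum.coe_decompose_mul_of_left_mem_of_not_le 𝒜 g.mem hDe] at hdecomp
    exact absurd hdecomp.symm hx0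

lemma exists_eq_smul (g : IsAntiGenerator 𝒜 w p D) (h0 : 𝒜 0 = 1) {x : E} (hx : x ∈ 𝒜 D)
    (hxw : w x = -x) : ∃ c : ℂ, x = c • p := by
  by_cases hx0 : x = 0
  · exact ⟨0, by rw [hx0, zero_smul]⟩
  obtain ⟨-, c, hc, rfl⟩ := g.exists_mem_eq_mul hx hx0 hxw
  rw [Nat.sub_self, h0] at hc
  obtain ⟨a, rfl⟩ := Submodule.mem_one.mp hc
  exact ⟨a, by rw [Algebra.smul_def, mul_comm]⟩

lemma eq_and_exists_eq_smul [Nontrivial E] (g : IsAntiGenerator 𝒜 w p D) {q : E} {D' : ℕ}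
    (g' : IsAntiGenerator 𝒜 w q D') (h0 : 𝒜 0 = 1) : D' = D ∧ ∃ c : ℂ, c ≠ 0 ∧ q = c • p := by
  have hDD' := (g.exists_mem_eq_mul g'.mem g'.ne_zero g'.map_eq_neg).1
  have hD'D := (g'.exists_mem_eq_mul g.mem g.ne_zero g.map_eq_neg).1
  obtain rfl : D' = D := le_antisymm hD'D hDD'
  obtain ⟨c, hc⟩ := g.exists_eq_smul h0 g'.mem g'.map_eq_neg
  exact ⟨rfl, c, by rintro rfl; exact g'.ne_zero (by rw [hc, zero_smul]), hc⟩

lemma map_ne_neg_of_map_eq [IsDomain E] (g : IsAntiGenerator 𝒜 w p D) {w' : E ≃ₐ[ℂ] E} {p' : E}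
    {D' : ℕ} (g' : IsAntiGenerator 𝒜 w' p' D') (hD' : 0 < D') (hwp' : w p' = p') :
    w' p ≠ -p := by
  intro hw'p
  obtain ⟨hle, c, hc, rfl⟩ := g'.exists_mem_eq_mul g.mem g.ne_zero hw'p
  have hwc : w c = -c := by
    have h := g.map_eq_neg
    rw [map_mul, hwp', ← mul_neg] at h
    exact mul_left_cancel₀ g'.ne_zero h
  have hc0 : c ≠ 0 := by rintro rfl; exact g.ne_zero (mul_zero p')
  have := (g.exists_mem_eq_mul hc hc0 hwc).1
  omega

end IsAntiGenerator

end AntiGenerator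

lemma AlgEquiv.map_sub_map_self {E : Type*} [CommRing E] [Algebra ℂ E] {w : E ≃ₐ[ℂ] E}
    (hw : Function.Involutive w) (z : E) : w (z - w z) = -(z - w z) := by
  rw [map_sub, hw z, neg_sub]

section EigenSupport

variable {E : Type*} [CommRing E] [Algebra ℂ E] {𝒜 : ℕ → Submodule ℂ E} [GradedAlgebra 𝒜]
  {k : ℕ} [NeZero k] {ψ : AddChar (ZMod k) ℂ} {R w : E ≃ₐ[ℂ] E} {p : E} {D : ℕ}

lemma eigenProj_neg_of_map_eq_neg (hψ : ψ.IsPrimitive) (hR : R.toLinearMap ^ k = 1)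
    (hwR : R.toLinearMap * w.toLinearMap * R.toLinearMap = w.toLinearMap) {x : E} (hx : w x = -x)
    (t : ZMod k) : eigenProj ψ R.toLinearMap (-t) x = -w (eigenProj ψ R.toLinearMap t x) := by
  rw [← AlgEquiv.toLinearMap_apply w, map_eigenProj hψ hR hwR, AlgEquiv.toLinearMap_apply, hx,
    map_neg, neg_neg]

lemma neg_mem_eigenSupport (hψ : ψ.IsPrimitive) (hR : R.toLinearMap ^ k = 1)
    (hwR : R.toLinearMap * w.toLinearMap * R.toLinearMap = w.toLinearMap) {x : E} (hx : w x = -x)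
    {t : ZMod k} (ht : t ∈ eigenSupport ψ R.toLinearMap x) :
    -t ∈ eigenSupport ψ R.toLinearMap x := by
  rw [mem_eigenSupport, eigenProj_neg_of_map_eq_neg hψ hR hwR hx, neg_ne_zero]
  exact fun h => ht (w.injective (by rw [h, map_zero]))

lemma eigenProj_sub_map_of_mem_eigenspace (hψ : ψ.IsPrimitive)
    (hwR : R.toLinearMap * w.toLinearMap * R.toLinearMap = w.toLinearMap) {t : ZMod k} {z : E}
    (hz : z ∈ eigenspace R.toLinearMap (ψ t)) :
    eigenProj ψ R.toLinearMap t (z - w z) = z - if -t = t then w z else 0 := by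
  have hwz : w z ∈ eigenspace R.toLinearMap (ψ (-t)) := map_mem_eigenspace_neg hwR hz
  rw [map_sub, eigenProj_apply_of_mem_eigenspace hψ hz, if_pos rfl,
    eigenProj_apply_of_mem_eigenspace hψ hwz]

lemma eq_sub_map_eigenProj (hψ : ψ.IsPrimitive) (hR : R.toLinearMap ^ k = 1)
    (hwR : R.toLinearMap * w.toLinearMap * R.toLinearMap = w.toLinearMap) {x : E} (hx : w x = -x)
    {l : ZMod k} (hsupp : eigenSupport ψ R.toLinearMap x ⊆ {l, -l}) (hl : l ≠ -l) :
    x = eigenProj ψ R.toLinearMap l x - w (eigenProj ψ R.toLinearMap l x) := by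
  conv_lhs => rw [← sum_eigenProj_apply (f := R.toLinearMap) hψ x]
  rw [Fintype.sum_eq_add l (-l) hl fun u hu => not_not.mp fun h => (hsupp h).elim hu.1 hu.2,
    sub_eq_add_neg, eigenProj_neg_of_map_eq_neg hψ hR hwR hx]

lemma mem_eigenspace_of_eigenSupport_subset (hψ : ψ.IsPrimitive) (hR : R.toLinearMap ^ k = 1)
    {x : E} {l : ZMod k} (hsupp : eigenSupport ψ R.toLinearMap x ⊆ {l, -l}) (hl : l = -l) :
    x ∈ eigenspace R.toLinearMap (ψ l) := by
  rw [← sum_eigenProj_apply (f := R.toLinearMap) hψ x, Fintype.sum_eq_single l fun u hu =>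
    not_not.mp fun h => (hsupp h).elim hu fun h' => hu (h'.trans hl.symm)]
  exact eigenProj_apply_mem_eigenspace hR l x

lemma exists_eigenProj_add_eigenProj_neg_eq_smul (h0 : 𝒜 0 = 1) (hψ : ψ.IsPrimitive)
    (hR : R.toLinearMap ^ k = 1) (hR𝒜 : ∀ m, ∀ x ∈ 𝒜 m, R x ∈ 𝒜 m)
    (hwR : R.toLinearMap * w.toLinearMap * R.toLinearMap = w.toLinearMap)
    (g : IsAntiGenerator 𝒜 w p D) (l : ZMod k) :
    ∃ c : ℂ, eigenProj ψ R.toLinearMap l p + eigenProj ψ R.toLinearMap (-l) p = c • p := by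
  refine g.exists_eq_smul h0 (add_mem (eigenProj_apply_mem (hR𝒜 D) _ g.mem)
    (eigenProj_apply_mem (hR𝒜 D) _ g.mem)) ?_
  have h₁ := eigenProj_neg_of_map_eq_neg hψ hR hwR g.map_eq_neg l
  have h₂ := eigenProj_neg_of_map_eq_neg hψ hR hwR g.map_eq_neg (-l)
  rw [neg_neg] at h₂
  rw [map_add]
  linear_combination h₁ + h₂

lemma exists_eigenSupport_subset [Nontrivial E] (h0 : 𝒜 0 = 1) (hψ : ψ.IsPrimitive)
    (hR : R.toLinearMap ^ k = 1) (hR𝒜 : ∀ m, ∀ x ∈ 𝒜 m, R x ∈ 𝒜 m)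
    (hwR : R.toLinearMap * w.toLinearMap * R.toLinearMap = w.toLinearMap)
    (g : IsAntiGenerator 𝒜 w p D) :
    ∃ l ∈ eigenSupport ψ R.toLinearMap p, eigenSupport ψ R.toLinearMap p ⊆ {l, -l} := by
  obtain ⟨l, hl⟩ : ∃ l, eigenProj ψ R.toLinearMap l p ≠ 0 := by
    by_contra! h
    exact g.ne_zero (by
      rw [← sum_eigenProj_apply (f := R.toLinearMap) hψ p]
      exact Finset.sum_eq_zero fun t _ => h t)
  obtain ⟨c, hc⟩ := exists_eigenProj_add_eigenProj_neg_eq_smul h0 hψ hR hR𝒜 hwR g l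
  have hπy (u : ZMod k) : eigenProj ψ R.toLinearMap u (c • p) =
      (if l = u then eigenProj ψ R.toLinearMap l p else 0) +
        if -l = u then eigenProj ψ R.toLinearMap (-l) p else 0 := by
    rw [← hc, map_add, eigenProj_eigenProj hψ hR, eigenProj_eigenProj hψ hR]
  have hc0 : c ≠ 0 := by
    rintro rfl
    have hπl := hπy l
    rw [zero_smul, map_zero, if_pos rfl] at hπl
    by_cases hl' : -l = l
    · rw [if_pos hl', hl', ← two_smul ℂ] at hπl
      exact hl ((smul_eq_zero_iff_right two_ne_zero).mp hπl.symm)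
    · rw [if_neg hl', add_zero] at hπl
      exact hl hπl.symm
  refine ⟨l, hl, fun u hu => ?_⟩
  by_contra hul
  simp only [Set.mem_insert_iff, Set.mem_singleton_iff, not_or] at hul
  have hπu := hπy u
  rw [map_smul, if_neg (Ne.symm hul.1), if_neg (Ne.symm hul.2), add_zero] at hπu
  exact hu ((smul_eq_zero_iff_right hc0).mp hπu)

lemma eigenspace_inf_eq_span (h0 : 𝒜 0 = 1) (hψ : ψ.IsPrimitive) (hR : R.toLinearMap ^ k = 1)
    (hR𝒜 : ∀ m, ∀ x ∈ 𝒜 m, R x ∈ 𝒜 m) (hw : Function.Involutive w)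
    (hw𝒜 : ∀ m, ∀ x ∈ 𝒜 m, w x ∈ 𝒜 m)
    (hwR : R.toLinearMap * w.toLinearMap * R.toLinearMap = w.toLinearMap)
    (g : IsAntiGenerator 𝒜 w p D) {t : ZMod k} (ht : t ≠ -t) :
    eigenspace R.toLinearMap (ψ t) ⊓ 𝒜 D = ℂ ∙ eigenProj ψ R.toLinearMap t p := by
  apply le_antisymm
  · rintro z ⟨hzt, hz𝒜⟩
    obtain ⟨c, hc⟩ := g.exists_eq_smul h0 (sub_mem hz𝒜 (hw𝒜 D z hz𝒜)) (w.map_sub_map_self hw z)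
    have hπ := eigenProj_sub_map_of_mem_eigenspace hψ hwR hzt
    rw [if_neg fun h => ht h.symm, sub_zero, hc, map_smul] at hπ
    exact Submodule.mem_span_singleton.mpr ⟨c, hπ⟩
  · rw [Submodule.span_singleton_le_iff_mem]
    exact ⟨eigenProj_apply_mem_eigenspace hR t p, eigenProj_apply_mem (hR𝒜 D) t g.mem⟩

lemma IsAntiGenerator.le_of_mem_eigenspace (hψ : ψ.IsPrimitive) (hw : Function.Involutive w)
    (hw𝒜 : ∀ m, ∀ x ∈ 𝒜 m, w x ∈ 𝒜 m)
    (hwR : R.toLinearMap * w.toLinearMap * R.toLinearMap = w.toLinearMap)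
    (g : IsAntiGenerator 𝒜 w p D) {t : ZMod k} {e : ℕ} {q : E}
    (hq : q ∈ eigenspace R.toLinearMap (ψ t)) (hq𝒜 : q ∈ 𝒜 e) (hq0 : q ≠ 0) (ht : t ≠ -t) :
    D ≤ e := by
  have hπ := eigenProj_sub_map_of_mem_eigenspace hψ hwR hq
  rw [if_neg fun h => ht h.symm, sub_zero] at hπ
  exact (g.exists_mem_eq_mul (sub_mem hq𝒜 (hw𝒜 e q hq𝒜))
    (fun h => hq0 (by rw [← hπ, h, map_zero])) (w.map_sub_map_self hw q)).1

lemma eigenProj_sub_map_eq_zero (hψ : ψ.IsPrimitive) (hR : R.toLinearMap ^ k = 1)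
    (hR𝒜 : ∀ m, ∀ x ∈ 𝒜 m, R x ∈ 𝒜 m) (hw : Function.Involutive w)
    (hw𝒜 : ∀ m, ∀ x ∈ 𝒜 m, w x ∈ 𝒜 m) (g : IsAntiGenerator 𝒜 w p D) (hD : 0 < D)
    {S : Set (ZMod k)} (hS : eigenSupport ψ R.toLinearMap p ⊆ S) {e : ℕ} {z : E} (hz : z ∈ 𝒜 e)
    {t : ZMod k} (hvan : ∀ e' < e, ∀ s ∈ S, ∀ y ∈ 𝒜 e',
      y ∈ eigenspace R.toLinearMap (ψ (t - s)) → y = 0) :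
    eigenProj ψ R.toLinearMap t (z - w z) = 0 := by
  by_cases hx0 : z - w z = 0
  · rw [hx0, map_zero]
  obtain ⟨hDe, c, hc, hxc⟩ :=
    g.exists_mem_eq_mul (sub_mem hz (hw𝒜 e z hz)) hx0 (w.map_sub_map_self hw z)
  -- each term of `π_t (p c)` pairs a component of `p`, indexed in `S`, with one of `c`,
  -- which has lower degree
  rw [hxc, eigenProj_mul hψ hR]
  refine Finset.sum_eq_zero fun s _ => ?_
  by_cases hs : s ∈ eigenSupport ψ R.toLinearMap p
  · rw [hvan (e - D) (by omega) s (hS hs) _ (eigenProj_apply_mem (hR𝒜 _) _ hc)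
      (eigenProj_apply_mem_eigenspace hR _ c), mul_zero]
  · rw [not_not.mp hs, zero_mul]

lemma eq_zero_of_mem_eigenspace_of_ne_neg (hψ : ψ.IsPrimitive) (hR : R.toLinearMap ^ k = 1)
    (hR𝒜 : ∀ m, ∀ x ∈ 𝒜 m, R x ∈ 𝒜 m) (hw : Function.Involutive w)
    (hw𝒜 : ∀ m, ∀ x ∈ 𝒜 m, w x ∈ 𝒜 m)
    (hwR : R.toLinearMap * w.toLinearMap * R.toLinearMap = w.toLinearMap)
    (g : IsAntiGenerator 𝒜 w p D) (hD : 0 < D) {l : ZMod k}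
    (hsupp : eigenSupport ψ R.toLinearMap p ⊆ {l, -l}) (hl : l = -l) {e : ℕ} {z : E}
    (hz : z ∈ 𝒜 e) {t : ZMod k} (ht : t ≠ -t) (hzt : z ∈ eigenspace R.toLinearMap (ψ t)) :
    z = 0 := by
  induction e using Nat.strong_induction_on generalizing z t with
  | _ e IH =>
  have hπ := eigenProj_sub_map_of_mem_eigenspace hψ hwR hzt
  rw [if_neg fun h => ht h.symm, sub_zero] at hπ
  rw [← hπ]
  refine eigenProj_sub_map_eq_zero hψ hR hR𝒜 hw hw𝒜 g hD hsupp hz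
    fun e' he' s hs y hy hyt => IH e' he' hy ?_ hyt
  obtain rfl : s = l := hs.elim id fun h => (Set.mem_singleton_iff.mp h).trans hl.symm
  -- since `l = -l`, `t - l` is self-paired only if `t` is
  intro h
  exact ht (by linear_combination h + hl)

end EigenSupport

lemma Subgroup.exists_mem_zpowers_of_mem_closure_pair {G : Type*} [Group G] {a b : G}
    (ha : a * a = 1) (hb : b * b = 1) {y : G} (hy : y ∈ closure ({a, b} : Set G)) :
    ∃ z ∈ zpowers (b * a), y = z ∨ y = z * a := by
  have ha' : a⁻¹ = a := inv_eq_of_mul_eq_one_right ha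
  have hb' : b⁻¹ = b := inv_eq_of_mul_eq_one_right hb
  have hconj (z : G) (hz : z ∈ zpowers (b * a)) : a * z = z⁻¹ * a := by
    obtain ⟨i, rfl⟩ := mem_zpowers_iff.mp hz
    have h : SemiconjBy a (b * a) (b * a)⁻¹ := by
      rw [SemiconjBy, mul_inv_rev, ha', hb', mul_assoc]
    have h' := h.zpow_right i
    rwa [inv_zpow] at h'
  let P (y : G) : Prop := ∃ z ∈ zpowers (b * a), y = z ∨ y = z * a
  have hPa (y : G) (hy : P y) : P (a * y) := by
    obtain ⟨z, hz, hyz | hyz⟩ := hy <;> rw [hyz]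
    · exact ⟨z⁻¹, inv_mem hz, Or.inr (hconj z hz)⟩
    · exact ⟨z⁻¹, inv_mem hz, Or.inl (by rw [← mul_assoc, hconj z hz, mul_assoc, ha, mul_one])⟩
  have hPb (y : G) (hy : P y) : P (b * y) := by
    obtain ⟨z, hz, hyz⟩ := hPa y hy
    have hbz : b * a * z ∈ zpowers (b * a) := mul_mem (mem_zpowers _) hz
    rw [show b * y = b * a * (a * y) by rw [mul_assoc, ← mul_assoc a, ha, one_mul]]
    rcases hyz with h | h <;> rw [h]
    exacts [⟨_, hbz, Or.inl rfl⟩, ⟨_, hbz, Or.inr (mul_assoc _ _ _).symm⟩]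
  induction hy using closure_induction_left with
  | one => exact ⟨1, one_mem _, Or.inl rfl⟩
  | mul_left x hx y _ ih => rcases hx with rfl | rfl; exacts [hPa _ ih, hPb _ ih]
  | inv_mul_cancel x hx y _ ih =>
    rcases hx with rfl | rfl
    · rw [ha']; exact hPa _ ih
    · rw [hb']; exact hPb _ ih

lemma Subgroup.card_closure_pair_le {G : Type*} [Group G] {a b : G} (ha : a * a = 1)
    (hb : b * b = 1) {n : ℕ} (hn : 0 < n) (hba : (b * a) ^ n = 1) :
    Nat.card (closure ({a, b} : Set G)) ≤ 2 * n := by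
  have hr : b * a ∈ closure ({a, b} : Set G) :=
    mul_mem (subset_closure (by simp)) (subset_closure (by simp))
  have ha_mem : a ∈ closure ({a, b} : Set G) := subset_closure (by simp)
  have : Finite (zpowers (b * a)) :=
    (isOfFinOrder_iff_pow_eq_one.mpr ⟨n, hn, hba⟩).finite_zpowers
  let f (x : zpowers (b * a) × Bool) : closure ({a, b} : Set G) :=
    ⟨if x.2 then x.1 * a else x.1, by
      split_ifs
      exacts [mul_mem (zpowers_le.mpr hr x.1.2) ha_mem, zpowers_le.mpr hr x.1.2]⟩
  have hf : Function.Surjective f := by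
    rintro ⟨y, hy⟩
    obtain ⟨z, hz, hyz | hyz⟩ := exists_mem_zpowers_of_mem_closure_pair ha hb hy
    exacts [⟨(⟨z, hz⟩, false), Subtype.ext hyz.symm⟩, ⟨(⟨z, hz⟩, true), Subtype.ext hyz.symm⟩]
  calc Nat.card (closure ({a, b} : Set G)) ≤ Nat.card (zpowers (b * a) × Bool) :=
        Nat.card_le_card_of_surjective f hf
    _ = orderOf (b * a) * 2 := by simp [Nat.card_prod, Nat.card_zpowers]
    _ ≤ 2 * n := by have := orderOf_le_of_pow_eq_one hn hba; omega

namespace ZMod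

lemma le_two_of_mulLeft_ker_eq_top {k : ℕ} (h : (AddMonoidHom.mulLeft (2 : ZMod k)).ker = ⊤) :
    k ≤ 2 := by
  have h2 : ((2 : ℕ) : ZMod k) = 0 := by
    simpa using (h ▸ AddSubgroup.mem_top (1 : ZMod k) :
      (1 : ZMod k) ∈ (AddMonoidHom.mulLeft (2 : ZMod k)).ker)
  exact Nat.le_of_dvd two_pos ((natCast_eq_zero_iff 2 k).mp h2)

variable {k : ℕ} [NeZero k]

lemma exists_two_mul_val_lt {l : ZMod k} (hl : l ≠ -l) :
    ∃ t, (t = l ∨ t = -l) ∧ 0 < t.val ∧ 2 * t.val < k := by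
  have hl0 : l ≠ 0 := fun h => hl (by rw [h, neg_zero])
  have hneg : (-l).val = k - l.val := by rw [neg_val, if_neg hl0]
  have hlt := val_lt l
  have hpos : 0 < l.val := Nat.pos_of_ne_zero ((val_ne_zero l).mpr hl0)
  have hne : 2 * l.val ≠ k := fun h => hl (val_injective k (by omega))
  rcases lt_or_gt_of_ne hne with h | h
  · exact ⟨l, Or.inl rfl, hpos, h⟩
  · exact ⟨-l, Or.inr rfl, by omega, by omega⟩

lemma gcd_val_eq_one_of_zmultiples_eq_top {l : ZMod k} (h : AddSubgroup.zmultiples l = ⊤) :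
    Nat.gcd l.val k = 1 := by
  have hord : addOrderOf l = k := by
    rw [← Nat.card_zmultiples, h, AddSubgroup.card_top, Nat.card_zmod]
  rw [← natCast_zmod_val l, addOrderOf_coe _ (NeZero.ne k), Nat.div_eq_self] at hord
  exact Nat.gcd_comm k l.val ▸ hord.resolve_left (NeZero.ne k)

end ZMod

lemma AddChar.eq_neg_one_of_eq_neg {R : Type*} [CommRing R] [IsDomain R] {k : ℕ} [NeZero k]
    {ψ : AddChar (ZMod k) R} (hψ : ψ.IsPrimitive) {t : ZMod k} (ht : t = -t) (ht0 : t ≠ 0) :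
    ψ t = -1 := by
  have hsq : ψ t * ψ t = 1 := by
    rw [← map_add_eq_mul]
    nth_rewrite 2 [ht]
    rw [add_neg_cancel, map_zero_eq_one]
  exact (mul_self_eq_one_iff.mp hsq).resolve_left
    fun h => ht0 ((IsPrimitive.zmod_char_eq_one_iff k hψ t).mp h)

lemma AddSubgroup.pair_neg_subset {G : Type*} [AddGroup G] {H : AddSubgroup G} {l : G}
    (hl : l ∈ H) : ({l, -l} : Set G) ⊆ H :=
  Set.insert_subset hl (Set.singleton_subset_iff.mpr (H.neg_mem hl))

lemma rank_span_singleton_eq_one {K V : Type*} [Field K] [AddCommGroup V] [Module K V] {x : V}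
    (hx : x ≠ 0) : Module.rank K (K ∙ x) = 1 :=
  (rank_span_set (LinearIndepOn.singleton (v := id) hx)).trans (Cardinal.mk_singleton x)

lemma rEig_val_eq_eigenspace {E : Type*} [AddCommGroup E] [Module ℂ E] {k : ℕ} [NeZero k]
    {ψ : AddChar (ZMod k) ℂ} {ζ : ℂ} (hψζ : ∀ t, ψ t = ζ ^ t.val) (f : Module.End ℂ E)
    (t : ZMod k) : rEig f ζ (t.val : ℤ) = eigenspace f (ψ t) := by
  rw [rEig, eigenspace_def, zpow_natCast, hψζ]

lemma rEig_neg_val_eq_eigenspace {E : Type*} [AddCommGroup E] [Module ℂ E] {k : ℕ} [NeZero k]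
    {ψ : AddChar (ZMod k) ℂ} {ζ : ℂ} (hψζ : ∀ t, ψ t = ζ ^ t.val) (f : Module.End ℂ E)
    (t : ZMod k) : rEig f ζ (-(t.val : ℤ)) = eigenspace f (ψ (-t)) := by
  rw [rEig, eigenspace_def, zpow_neg, zpow_natCast, ← hψζ, AddChar.map_neg_eq_inv]

lemma trichotomy_of_or {E : Type*} [CommRing E] [Algebra ℂ E] {𝒜 : ℕ → Submodule ℂ E}
    {k nm np : ℕ} {ζ : ℂ} {wm wp : E ≃ₐ[ℂ] E} {pm pp : E}
    (h : TrichotomyCase1 k nm np pm pp ∨ TrichotomyCase2 k wm wp pm pp ∨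
      TrichotomyCase3 𝒜 k nm np ζ wm wp pm pp) :
    (TrichotomyCase1 k nm np pm pp ∧ ¬TrichotomyCase2 k wm wp pm pp ∧
        ¬TrichotomyCase3 𝒜 k nm np ζ wm wp pm pp) ∨
      (¬TrichotomyCase1 k nm np pm pp ∧ TrichotomyCase2 k wm wp pm pp ∧
        ¬TrichotomyCase3 𝒜 k nm np ζ wm wp pm pp) ∨
      (¬TrichotomyCase1 k nm np pm pp ∧ ¬TrichotomyCase2 k wm wp pm pp ∧
        TrichotomyCase3 𝒜 k nm np ζ wm wp pm pp) := by
  have k₁ : TrichotomyCase1 k nm np pm pp → k = 1 := And.left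
  have k₂ : TrichotomyCase2 k wm wp pm pp → k = 2 := And.left
  have k₃ : TrichotomyCase3 𝒜 k nm np ζ wm wp pm pp → 3 ≤ k := fun ⟨_, _, _, hj, hjk, _⟩ => by
    omega
  rcases h with h | h | h
  · have := k₁ h
    exact .inl ⟨h, fun h => by have := k₂ h; omega, fun h => by have := k₃ h; omega⟩
  · have := k₂ h
    exact .inr (.inl ⟨fun h => by have := k₁ h; omega, h, fun h => by have := k₃ h; omega⟩)
  · have := k₃ h
    exact .inr (.inr ⟨fun h => by have := k₁ h; omega, fun h => by have := k₂ h; omega, h⟩)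

structure DihedralReflectionData {E : Type*} [CommRing E] [Algebra ℂ E]
    (𝒜 : ℕ → Submodule ℂ E) (k : ℕ) (wm wp : E ≃ₐ[ℂ] E) (pm pp : E) (Dm Dp : ℕ) : Prop where
  grade_zero : 𝒜 0 = 1
  map_mem_m : ∀ m, ∀ x ∈ 𝒜 m, wm x ∈ 𝒜 m
  map_mem_p : ∀ m, ∀ x ∈ 𝒜 m, wp x ∈ 𝒜 m
  mul_self_m : wm * wm = 1
  mul_self_p : wp * wp = 1
  pow_eq_one : (wp * wm) ^ k = 1
  card_closure : Nat.card (Subgroup.closure ({wm, wp} : Set (E ≃ₐ[ℂ] E))) = 2 * k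
  pos_m : 0 < Dm
  pos_p : 0 < Dp
  gen_m : IsAntiGenerator 𝒜 wm pm Dm
  gen_p : IsAntiGenerator 𝒜 wp pp Dp

namespace DihedralReflectionData

variable {E : Type*} [CommRing E] [Algebra ℂ E] {𝒜 : ℕ → Submodule ℂ E} {k : ℕ}
  {wm wp : E ≃ₐ[ℂ] E} {pm pp : E} {Dm Dp : ℕ}

lemma involutive_m (h : DihedralReflectionData 𝒜 k wm wp pm pp Dm Dp) :
    Function.Involutive wm := fun x => by
  rw [← AlgEquiv.mul_apply, h.mul_self_m, AlgEquiv.one_apply]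

lemma involutive_p (h : DihedralReflectionData 𝒜 k wm wp pm pp Dm Dp) :
    Function.Involutive wp := fun x => by
  rw [← AlgEquiv.mul_apply, h.mul_self_p, AlgEquiv.one_apply]

lemma pow_toLinearMap (h : DihedralReflectionData 𝒜 k wm wp pm pp Dm Dp) :
    (wp * wm).toLinearMap ^ k = 1 := by
  rw [← AlgEquiv.pow_toLinearMap, h.pow_eq_one, AlgEquiv.one_toLinearMap]

lemma map_mem_mul (h : DihedralReflectionData 𝒜 k wm wp pm pp Dm Dp) :
    ∀ m, ∀ x ∈ 𝒜 m, (wp * wm) x ∈ 𝒜 m :=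
  fun m x hx => h.map_mem_p m _ (h.map_mem_m m x hx)

lemma conj_m (h : DihedralReflectionData 𝒜 k wm wp pm pp Dm Dp) :
    (wp * wm).toLinearMap * wm.toLinearMap * (wp * wm).toLinearMap = wm.toLinearMap := by
  ext x
  simp [h.involutive_m _, h.involutive_p _]

lemma conj_p (h : DihedralReflectionData 𝒜 k wm wp pm pp Dm Dp) :
    (wp * wm).toLinearMap * wp.toLinearMap * (wp * wm).toLinearMap = wp.toLinearMap := by
  ext x
  simp [h.involutive_m _, h.involutive_p _]

variable [GradedAlgebra 𝒜]

lemma trichotomyCase1 [Nontrivial E] {nm np : ℕ}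
    (h : DihedralReflectionData 𝒜 1 wm wp pm pp (2 * nm) (2 * np)) :
    TrichotomyCase1 1 nm np pm pp := by
  obtain rfl : wp = wm := by
    rw [← mul_one wp, ← h.mul_self_m, ← mul_assoc, ← pow_one (wp * wm), h.pow_eq_one, one_mul]
  obtain ⟨hD, c, hc0, hc⟩ := h.gen_m.eq_and_exists_eq_smul h.gen_p h.grade_zero
  exact ⟨rfl, by omega, c, hc0, hc⟩

variable [NeZero k] {ψ : AddChar (ZMod k) ℂ}

lemma eq_zero_of_mem_eigenspace (h : DihedralReflectionData 𝒜 k wm wp pm pp Dm Dp)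
    (hψ : ψ.IsPrimitive) (H : AddSubgroup (ZMod k))
    (hm : eigenSupport ψ (wp * wm).toLinearMap pm ⊆ H)
    (hp : eigenSupport ψ (wp * wm).toLinearMap pp ⊆ H) {e : ℕ} {z : E} (hz : z ∈ 𝒜 e)
    {t : ZMod k} (ht : t ∉ H) (hzt : z ∈ eigenspace (wp * wm).toLinearMap (ψ t)) : z = 0 := by
  induction e using Nat.strong_induction_on generalizing z t with
  | _ e IH =>
  have hvan : ∀ e' < e, ∀ s ∈ (H : Set (ZMod k)), ∀ y ∈ 𝒜 e',
      y ∈ eigenspace (wp * wm).toLinearMap (ψ (t - s)) → y = 0 :=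
    fun e' he' s hs y hy hyt =>
      IH e' he' hy (fun hts => ht (by simpa using H.add_mem hts hs)) hyt
  have hπm := eigenProj_sub_map_eq_zero hψ h.pow_toLinearMap h.map_mem_mul h.involutive_m
    h.map_mem_m h.gen_m h.pos_m hm hz hvan
  have hπp := eigenProj_sub_map_eq_zero hψ h.pow_toLinearMap h.map_mem_mul h.involutive_p
    h.map_mem_p h.gen_p h.pos_p hp hz hvan
  rw [eigenProj_sub_map_of_mem_eigenspace hψ h.conj_m hzt] at hπm
  rw [eigenProj_sub_map_of_mem_eigenspace hψ h.conj_p hzt] at hπp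
  by_cases htt : -t = t
  · -- `z` is fixed by both reflections, hence by `wp * wm`, which forces `t = 0 ∈ H`
    rw [if_pos htt, sub_eq_zero] at hπm hπp
    have hfix : (ψ t - 1) • z = 0 := by
      have hRz := mem_eigenspace_iff.mp hzt
      rw [AlgEquiv.toLinearMap_apply, AlgEquiv.mul_apply, ← hπm, ← hπp] at hRz
      rw [sub_smul, one_smul, ← hRz, sub_self]
    refine (smul_eq_zero_iff_right fun h1 => ht ?_).mp hfix
    rw [sub_eq_zero, AddChar.IsPrimitive.zmod_char_eq_one_iff k hψ] at h1
    exact h1 ▸ H.zero_mem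
  · rwa [if_neg htt, sub_zero] at hπm

lemma pow_card_eq_one (h : DihedralReflectionData 𝒜 k wm wp pm pp Dm Dp) (hψ : ψ.IsPrimitive)
    (H : AddSubgroup (ZMod k)) (hm : eigenSupport ψ (wp * wm).toLinearMap pm ⊆ H)
    (hp : eigenSupport ψ (wp * wm).toLinearMap pp ⊆ H) : (wp * wm) ^ Nat.card H = 1 := by
  have hfix (i : ℕ) (x : E) (hx : x ∈ 𝒜 i) (t : ZMod k) :
      ((wp * wm) ^ Nat.card H) (eigenProj ψ (wp * wm).toLinearMap t x) =
        eigenProj ψ (wp * wm).toLinearMap t x := by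
    by_cases ht : t ∈ H
    · have hct := congrArg Subtype.val (card_nsmul_eq_zero' (G := H) (x := ⟨t, ht⟩))
      rw [AddSubgroup.coe_nsmul, AddSubgroup.coe_zero] at hct
      rw [← AlgEquiv.toLinearMap_apply, AlgEquiv.pow_toLinearMap, pow_apply_of_mem_eigenspace
        (eigenProj_apply_mem_eigenspace h.pow_toLinearMap t x), ← AddChar.map_nsmul_eq_pow, hct,
        AddChar.map_zero_eq_one, one_smul]
    · rw [h.eq_zero_of_mem_eigenspace hψ H hm hp (eigenProj_apply_mem (h.map_mem_mul i) t hx) ht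
        (eigenProj_apply_mem_eigenspace h.pow_toLinearMap t x), map_zero]
  refine AlgEquiv.ext fun z => ?_
  induction z using DirectSum.Decomposition.inductionOn 𝒜 with
  | zero => simp
  | homogeneous x =>
    rw [AlgEquiv.one_apply, ← sum_eigenProj_apply (f := (wp * wm).toLinearMap) hψ (x : E),
      map_sum]
    exact Finset.sum_congr rfl fun t _ => hfix _ x x.2 t
  | add x y hx hy => rw [map_add, hx, hy, map_add]

lemma eq_top (h : DihedralReflectionData 𝒜 k wm wp pm pp Dm Dp) (hψ : ψ.IsPrimitive)
    (H : AddSubgroup (ZMod k)) (hm : eigenSupport ψ (wp * wm).toLinearMap pm ⊆ H)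
    (hp : eigenSupport ψ (wp * wm).toLinearMap pp ⊆ H) : H = ⊤ := by
  have hle := Subgroup.card_closure_pair_le h.mul_self_m h.mul_self_p Nat.card_pos
    (h.pow_card_eq_one hψ H hm hp)
  rw [h.card_closure] at hle
  refine (AddSubgroup.card_eq_iff_eq_top H).mp (le_antisymm H.card_le_card_addGroup ?_)
  rw [Nat.card_zmod]
  omega

lemma trichotomyCase2 [IsDomain E] (h : DihedralReflectionData 𝒜 k wm wp pm pp Dm Dp)
    (hψ : ψ.IsPrimitive) (hk : 2 ≤ k) {l m : ZMod k}
    (hl : eigenSupport ψ (wp * wm).toLinearMap pm ⊆ {l, -l}) (hl' : l = -l)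
    (hm : eigenSupport ψ (wp * wm).toLinearMap pp ⊆ {m, -m}) (hm' : m = -m) :
    TrichotomyCase2 k wm wp pm pp := by
  have hRpm : wp (wm pm) = ψ l • pm :=
    mem_eigenspace_iff.mp (mem_eigenspace_of_eigenSupport_subset hψ h.pow_toLinearMap hl hl')
  have hRpp : wp (wm pp) = ψ m • pp :=
    mem_eigenspace_iff.mp (mem_eigenspace_of_eigenSupport_subset hψ h.pow_toLinearMap hm hm')
  by_cases hl0 : l = 0 <;> by_cases hm0 : m = 0
  · -- `wp * wm` would act trivially
    have : Nontrivial (ZMod k) := ZMod.nontrivial_iff.mpr (by omega)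
    exact absurd (h.eq_top hψ ⊥ (hl.trans (AddSubgroup.pair_neg_subset (hl0 ▸ zero_mem _)))
      (hm.trans (AddSubgroup.pair_neg_subset (hm0 ▸ zero_mem _)))) bot_ne_top
  · rw [hl0, AddChar.map_zero_eq_one, one_smul, h.gen_m.map_eq_neg, map_neg,
      neg_eq_iff_eq_neg] at hRpm
    have hwm : wm pp = pp := by
      have := congrArg wp hRpp
      rwa [h.involutive_p, AddChar.eq_neg_one_of_eq_neg hψ hm' hm0, neg_one_smul, map_neg,
        h.gen_p.map_eq_neg, neg_neg] at this
    exact (h.gen_m.map_ne_neg_of_map_eq h.gen_p h.pos_p hwm hRpm).elim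
  · rw [hm0, AddChar.map_zero_eq_one, one_smul] at hRpp
    have hwm : wm pp = -pp := by
      have := congrArg wp hRpp
      rwa [h.involutive_p, h.gen_p.map_eq_neg] at this
    rw [AddChar.eq_neg_one_of_eq_neg hψ hl' hl0, neg_one_smul, h.gen_m.map_eq_neg, map_neg,
      neg_inj] at hRpm
    exact (h.gen_p.map_ne_neg_of_map_eq h.gen_m h.pos_m hRpm hwm).elim
  · -- the `2`-torsion of `ℤ/k` contains both supports, so it is everything and `k = 2`
    have htwo (t : ZMod k) (ht : t = -t) : t ∈ (AddMonoidHom.mulLeft (2 : ZMod k)).ker := by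
      rw [AddMonoidHom.mem_ker, AddMonoidHom.coe_mulLeft]
      linear_combination ht
    refine ⟨le_antisymm (ZMod.le_two_of_mulLeft_ker_eq_top (h.eq_top hψ _
      (hl.trans (AddSubgroup.pair_neg_subset (htwo l hl')))
      (hm.trans (AddSubgroup.pair_neg_subset (htwo m hm'))))) hk, ?_, ?_⟩
    · rw [hRpp, AddChar.eq_neg_one_of_eq_neg hψ hm' hm0, neg_one_smul]
    · rw [hRpm, AddChar.eq_neg_one_of_eq_neg hψ hl' hl0, neg_one_smul]

lemma eq_and_exists_smul_eq_sub_map (h : DihedralReflectionData 𝒜 k wm wp pm pp Dm Dp)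
    (hψ : ψ.IsPrimitive) {t m : ZMod k} {q : E}
    (hqt : q ∈ eigenspace (wp * wm).toLinearMap (ψ t)) (hq𝒜 : q ∈ 𝒜 Dm) (hq0 : q ≠ 0)
    (htneg : t ≠ -t) (hm : m ∈ eigenSupport ψ (wp * wm).toLinearMap pp) (hmneg : m ≠ -m) :
    Dp = Dm ∧ ∃ c : ℂ, c ≠ 0 ∧ c • pp = q - wp q ∧
      eigenSupport ψ (wp * wm).toLinearMap pp ⊆ {t, -t} := by
  have hle₁ : Dp ≤ Dm := h.gen_p.le_of_mem_eigenspace hψ h.involutive_p h.map_mem_p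
    h.conj_p hqt hq𝒜 hq0 htneg
  have hle₂ : Dm ≤ Dp := h.gen_m.le_of_mem_eigenspace hψ h.involutive_m h.map_mem_m
    h.conj_m (eigenProj_apply_mem_eigenspace h.pow_toLinearMap m pp)
    (eigenProj_apply_mem (h.map_mem_mul _) m h.gen_p.mem) hm hmneg
  obtain rfl : Dp = Dm := le_antisymm hle₁ hle₂
  obtain ⟨c, hc⟩ := h.gen_p.exists_eq_smul h.grade_zero (sub_mem hq𝒜 (h.map_mem_p _ q hq𝒜))
    (wp.map_sub_map_self h.involutive_p q)
  have hπ (u : ZMod k) : eigenProj ψ (wp * wm).toLinearMap u (c • pp) =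
      (if t = u then q else 0) - if -t = u then wp q else 0 := by
    have hwq : wp q ∈ eigenspace (wp * wm).toLinearMap (ψ (-t)) :=
      map_mem_eigenspace_neg h.conj_p hqt
    rw [← hc, map_sub, eigenProj_apply_of_mem_eigenspace hψ hqt,
      eigenProj_apply_of_mem_eigenspace hψ hwq]
  have hc0 : c ≠ 0 := by
    rintro rfl
    have := hπ t
    rw [zero_smul, map_zero, if_pos rfl, if_neg fun h => htneg h.symm, sub_zero] at this
    exact hq0 this.symm
  refine ⟨rfl, c, hc0, hc.symm, fun u hu => ?_⟩
  by_contra hut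
  simp only [Set.mem_insert_iff, Set.mem_singleton_iff, not_or] at hut
  have := hπ u
  rw [if_neg (Ne.symm hut.1), if_neg (Ne.symm hut.2), sub_zero, map_smul] at this
  exact hu ((smul_eq_zero_iff_right hc0).mp this)

lemma trichotomyCase3 {ζ : ℂ} {nm np : ℕ}
    (h : DihedralReflectionData 𝒜 k wm wp pm pp (2 * nm) (2 * np)) (hψ : ψ.IsPrimitive)
    (hψζ : ∀ t, ψ t = ζ ^ t.val) {t m : ZMod k}
    (htsupp : eigenSupport ψ (wp * wm).toLinearMap pm ⊆ {t, -t})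
    (ht : t ∈ eigenSupport ψ (wp * wm).toLinearMap pm) (htneg : t ≠ -t) (htpos : 0 < t.val)
    (htk : 2 * t.val < k) (hm : m ∈ eigenSupport ψ (wp * wm).toLinearMap pp) (hmneg : m ≠ -m) :
    TrichotomyCase3 𝒜 k nm np ζ wm wp pm pp := by
  obtain ⟨q, hq⟩ : ∃ q, eigenProj ψ (wp * wm).toLinearMap t pm = q := ⟨_, rfl⟩
  have hqt : q ∈ eigenspace (wp * wm).toLinearMap (ψ t) :=
    hq ▸ eigenProj_apply_mem_eigenspace h.pow_toLinearMap t pm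
  have hq𝒜 : q ∈ 𝒜 (2 * nm) := hq ▸ eigenProj_apply_mem (h.map_mem_mul _) t h.gen_m.mem
  have hpm : pm = q - wm q :=
    hq ▸ eq_sub_map_eigenProj hψ h.pow_toLinearMap h.conj_m h.gen_m.map_eq_neg htsupp htneg
  obtain ⟨hD, c, hc0, hc, hpsupp⟩ :=
    h.eq_and_exists_smul_eq_sub_map hψ hqt hq𝒜 (hq ▸ ht) htneg hm hmneg
  obtain rfl : np = nm := by omega
  have hgen := h.eq_top hψ (AddSubgroup.zmultiples t)
    (htsupp.trans (AddSubgroup.pair_neg_subset (AddSubgroup.mem_zmultiples t)))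
    (hpsupp.trans (AddSubgroup.pair_neg_subset (AddSubgroup.mem_zmultiples t)))
  have hnegt : -t ∈ eigenSupport ψ (wp * wm).toLinearMap pm :=
    neg_mem_eigenSupport hψ h.pow_toLinearMap h.conj_m h.gen_m.map_eq_neg ht
  refine ⟨by omega, rfl, t.val, htpos, htk, ZMod.gcd_val_eq_one_of_zmultiples_eq_top hgen, q, c, 1,
    hq𝒜, by rwa [rEig_val_eq_eigenspace hψζ], hc0, one_ne_zero, hc, by rw [one_smul, ← hpm], ?_, ?_⟩
  · rw [rEig_val_eq_eigenspace hψζ, eigenspace_inf_eq_span h.grade_zero hψ h.pow_toLinearMap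
      h.map_mem_mul h.involutive_m h.map_mem_m h.conj_m h.gen_m htneg]
    exact rank_span_singleton_eq_one ht
  · rw [rEig_neg_val_eq_eigenspace hψζ, eigenspace_inf_eq_span h.grade_zero hψ h.pow_toLinearMap
      h.map_mem_mul h.involutive_m h.map_mem_m h.conj_m h.gen_m (by rwa [neg_neg, ne_comm])]
    exact rank_span_singleton_eq_one hnegt

lemma trichotomyCase2_or_trichotomyCase3 [IsDomain E] {ζ : ℂ} {nm np : ℕ}
    (h : DihedralReflectionData 𝒜 k wm wp pm pp (2 * nm) (2 * np)) (hψ : ψ.IsPrimitive)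
    (hψζ : ∀ t, ψ t = ζ ^ t.val) (hk : 2 ≤ k) :
    TrichotomyCase2 k wm wp pm pp ∨ TrichotomyCase3 𝒜 k nm np ζ wm wp pm pp := by
  obtain ⟨l, hl, hlsupp⟩ := exists_eigenSupport_subset h.grade_zero hψ h.pow_toLinearMap
    h.map_mem_mul h.conj_m h.gen_m
  obtain ⟨m, hm, hmsupp⟩ := exists_eigenSupport_subset h.grade_zero hψ h.pow_toLinearMap
    h.map_mem_mul h.conj_p h.gen_p
  by_cases hl' : l = -l <;> by_cases hm' : m = -m
  · exact .inl (h.trichotomyCase2 hψ hk hlsupp hl' hmsupp hm')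
  · exact absurd (eq_zero_of_mem_eigenspace_of_ne_neg hψ h.pow_toLinearMap h.map_mem_mul
      h.involutive_m h.map_mem_m h.conj_m h.gen_m h.pos_m hlsupp hl'
      (eigenProj_apply_mem (h.map_mem_mul _) m h.gen_p.mem) hm'
      (eigenProj_apply_mem_eigenspace h.pow_toLinearMap m pp)) hm
  · exact absurd (eq_zero_of_mem_eigenspace_of_ne_neg hψ h.pow_toLinearMap h.map_mem_mul
      h.involutive_p h.map_mem_p h.conj_p h.gen_p h.pos_p hmsupp hm'
      (eigenProj_apply_mem (h.map_mem_mul _) l h.gen_m.mem) hl'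
      (eigenProj_apply_mem_eigenspace h.pow_toLinearMap l pm)) hl
  · obtain ⟨t, rfl | rfl, htpos, htk⟩ := ZMod.exists_two_mul_val_lt hl'
    · exact .inr (h.trichotomyCase3 hψ hψζ hlsupp hl hl' htpos htk hm hm')
    · refine .inr (h.trichotomyCase3 hψ hψζ (by rwa [neg_neg, Set.pair_comm])
        (neg_mem_eigenSupport hψ h.pow_toLinearMap h.conj_m h.gen_m.map_eq_neg hl)
        (by rwa [neg_neg, ne_comm]) htpos htk hm hm')

end DihedralReflectionData

/-- Let `k ≥ 1` and let `E = ⊕_{m ≥ 0} E^m` be a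
nonnegatively graded commutative `ℂ`-algebra which is an integral domain with
`E^0 = ℂ`.  Let `wm, wp` ("w₋", "w₊") be degree-preserving `ℂ`-algebra
automorphisms of `E` with `w₋² = w₊² = id` and `(w₊w₋)^k = id`, generating a
subgroup of order exactly `2k` (a faithful dihedral action); set `r = w₊w₋`
and `ζ = e^{2πi/k}`.  Suppose given integers `n₋, n₊ ≥ 1` and homogeneous
elements `p₋ ∈ E^{2n₋}`, `p₊ ∈ E^{2n₊}` with `w₋ p₋ = -p₋`, `w₊ p₊ = -p₊`,
such that `E = E^{w₋} ⊕ p₋E^{w₋}` and `E = E^{w₊} ⊕ p₊E^{w₊}`.  Then exactly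
one of the three cases (i), (ii), (iii) holds. -/
theorem stmt10 {E : Type*} [CommRing E] [IsDomain E] [Algebra ℂ E]
    (𝒜 : ℕ → Submodule ℂ E) [GradedAlgebra 𝒜]
    (h0 : 𝒜 0 = 1)
    (k : ℕ) (hk : 1 ≤ k)
    (wm wp : E ≃ₐ[ℂ] E)
    (hdeg : ∀ m : ℕ, ∀ x ∈ 𝒜 m, wm x ∈ 𝒜 m ∧ wp x ∈ 𝒜 m)
    (hm : wm * wm = 1) (hp : wp * wp = 1)
    (hord : (wp * wm) ^ k = 1)
    (hfaithful : Nat.card ↥(Subgroup.closure ({wm, wp} : Set (E ≃ₐ[ℂ] E))) = 2 * k)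
    (ζ : ℂ) (hζ : ζ = Complex.exp (2 * Real.pi * Complex.I / k))
    (nm np : ℕ) (hnm : 1 ≤ nm) (hnp : 1 ≤ np)
    (pm pp : E) (hpm : pm ∈ 𝒜 (2 * nm)) (hpp : pp ∈ 𝒜 (2 * np))
    (hpmeig : wm pm = -pm) (hppeig : wp pp = -pp)
    (hdm : ∀ a : E, ∃! bc : E × E,
      (wm bc.1 = bc.1 ∧ wm bc.2 = bc.2) ∧ a = bc.1 + pm * bc.2)
    (hdp : ∀ a : E, ∃! bc : E × E,
      (wp bc.1 = bc.1 ∧ wp bc.2 = bc.2) ∧ a = bc.1 + pp * bc.2) :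
    (TrichotomyCase1 k nm np pm pp ∧
      ¬TrichotomyCase2 k wm wp pm pp ∧
      ¬TrichotomyCase3 𝒜 k nm np ζ wm wp pm pp) ∨
    (¬TrichotomyCase1 k nm np pm pp ∧
      TrichotomyCase2 k wm wp pm pp ∧
      ¬TrichotomyCase3 𝒜 k nm np ζ wm wp pm pp) ∨
    (¬TrichotomyCase1 k nm np pm pp ∧
      ¬TrichotomyCase2 k wm wp pm pp ∧
      TrichotomyCase3 𝒜 k nm np ζ wm wp pm pp) := by
  have h : DihedralReflectionData 𝒜 k wm wp pm pp (2 * nm) (2 * np) :=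
    ⟨h0, fun m x hx => (hdeg m x hx).1, fun m x hx => (hdeg m x hx).2, hm, hp, hord, hfaithful,
      by omega, by omega, ⟨hpm, hpmeig, hdm⟩, ⟨hpp, hppeig, hdp⟩⟩
  apply trichotomy_of_or
  obtain rfl | hk2 : k = 1 ∨ 2 ≤ k := by omega
  · exact .inl h.trichotomyCase1
  · have : NeZero k := ⟨by omega⟩
    have hprim : IsPrimitiveRoot ζ k := hζ ▸ Complex.isPrimitiveRoot_exp k (NeZero.ne k)
    exact .inr (h.trichotomyCase2_or_trichotomyCase3
      (AddChar.zmodChar_primitive_of_primitive_root k hprim) (AddChar.zmodChar_apply _) hk2)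
end

section
/- The number k(n₋ + n₊) is even. -/
/-- In a group, if `a² = b² = 1` and `(b*a)^k = 1` with `k` odd, then
`b` is conjugate to `a` by a power of `b*a`. -/
lemma stmt11_conj {G : Type*} [Group G] (a b : G) (k : ℕ) (hk : Odd k)
    (ha : a * a = 1) (hb : b * b = 1) (h : (b * a) ^ k = 1) :
    (b * a) ^ ((k + 1) / 2) * a * ((b * a) ^ ((k + 1) / 2))⁻¹ = b := by
  set c := b * a with hc
  have hainv : a⁻¹ = a := inv_eq_of_mul_eq_one_right ha
  have hbinv : b⁻¹ = b := inv_eq_of_mul_eq_one_right hb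
  have h1 : a * c * a⁻¹ = c⁻¹ := by
    rw [hc, mul_inv_rev, hainv, hbinv]
    calc a * (b * a) * a = a * b * (a * a) := by group
      _ = a * b := by rw [ha, mul_one]
  set m := (k + 1) / 2 with hm
  have h2m : 2 * m = k + 1 := by
    obtain ⟨t, rfl⟩ := hk; omega
  have h2 : a * c ^ m * a⁻¹ = (c⁻¹) ^ m := by
    rw [← h1, conj_pow]
  calc c ^ m * a * (c ^ m)⁻¹
      = c ^ m * (a * (c ^ m)⁻¹ * a⁻¹) * a := by group
    _ = c ^ m * (a * c ^ m * a⁻¹)⁻¹ * a := by group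
    _ = c ^ m * ((c⁻¹) ^ m)⁻¹ * a := by rw [h2]
    _ = c ^ (2 * m) * a := by rw [inv_pow, inv_inv, two_mul, pow_add]
    _ = c ^ k * c * a := by rw [h2m, pow_succ]
    _ = b := by rw [h, one_mul, hc, mul_assoc, ha, mul_one]

/-- Degree comparison lemma: if `q ∈ 𝒜 n₁` is nonzero and anti-invariant for `w`,
`p ∈ 𝒜 n₂` is nonzero with `w p = -p`, and every element decomposes as
`b + p * c` with `b, c` `w`-invariant, then `n₂ ≤ n₁`. -/
lemma stmt11_aux {E : Type*} [CommRing E] [IsDomain E] [Algebra ℂ E]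
    (𝒜 : ℕ → Submodule ℂ E) [GradedAlgebra 𝒜]
    (w : E ≃ₐ[ℂ] E) (n1 n2 : ℕ) (q p : E)
    (hq : q ∈ 𝒜 n1) (hp : p ∈ 𝒜 n2) (hq0 : q ≠ 0) (hp0 : p ≠ 0)
    (hwq : w q = -q) (hwp : w p = -p)
    (hd : ∀ a : E, ∃! bc : E × E,
      (w bc.1 = bc.1 ∧ w bc.2 = bc.2) ∧ a = bc.1 + p * bc.2) :
    n2 ≤ n1 := by
  classical
  have hchar : CharZero E := charZero_of_injective_algebraMap
    (algebraMap ℂ E).injective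
  obtain ⟨⟨b, c⟩, ⟨⟨hb, hc⟩, heq⟩, -⟩ := hd q
  -- apply w to the decomposition
  have heq2 : -q = b - p * c := by
    rw [← hwq, heq]
    simp [map_add, map_mul, hb, hc, hwp, sub_eq_add_neg]
  -- b = 0
  have hb0 : b = 0 := by
    have h2b : (2 : E) * b = 0 := by
      have := congrArg₂ (· + ·) heq heq2
      simp only [add_neg_cancel] at this
      rw [show b + p * c + (b - p * c) = 2 * b by ring] at this
      exact this.symm
    rcases mul_eq_zero.mp h2b with h | h
    · exact absurd h two_ne_zero
    · exact h
  have hqpc : q = p * c := by rw [heq, hb0, zero_add]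
  have hc0 : c ≠ 0 := by
    rintro rfl; rw [mul_zero] at hqpc; exact hq0 hqpc
  -- pick a nonzero component of c
  have : ∃ j : ℕ, (DirectSum.decompose 𝒜 c j : E) ≠ 0 := by
    by_contra hall
    push_neg at hall
    apply hc0
    rw [← DirectSum.sum_support_decompose 𝒜 c]
    exact Finset.sum_eq_zero fun j _ => hall j
  obtain ⟨j, hj⟩ := this
  have hcomp : (DirectSum.decompose 𝒜 q (n2 + j) : E)
      = p * (DirectSum.decompose 𝒜 c j : E) := by
    rw [hqpc, DirectSum.coe_decompose_mul_of_left_mem_of_le 𝒜 hp (Nat.le_add_right _ _),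
      Nat.add_sub_cancel_left]
  have hne : (p * (DirectSum.decompose 𝒜 c j : E)) ≠ 0 := mul_ne_zero hp0 hj
  by_contra hlt
  push_neg at hlt
  have : n1 ≠ n2 + j := by omega
  rw [DirectSum.decompose_of_mem_ne 𝒜 hq this] at hcomp
  exact hne hcomp.symm

/-- Let `k ≥ 1` and let `E = ⊕_{m ≥ 0} E^m` be a
nonnegatively graded commutative `ℂ`-algebra which is an integral domain with
`E^0 = ℂ`.  Let `wm, wp` ("w₋", "w₊") be degree-preserving `ℂ`-algebra
automorphisms of `E` with `w₋² = w₊² = id` and `(w₊w₋)^k = id`, generating a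
subgroup of order exactly `2k` (a faithful dihedral action).  Suppose given
integers `n₋, n₊ ≥ 1` and homogeneous elements `p₋ ∈ E^{2n₋}`, `p₊ ∈ E^{2n₊}`
with `w₋ p₋ = -p₋`, `w₊ p₊ = -p₊`, such that `E = E^{w₋} ⊕ p₋E^{w₋}` and
`E = E^{w₊} ⊕ p₊E^{w₊}`.  Then `k(n₋ + n₊)` is even. -/
theorem stmt11 {E : Type*} [CommRing E] [IsDomain E] [Algebra ℂ E]
    (𝒜 : ℕ → Submodule ℂ E) [GradedAlgebra 𝒜]
    (h0 : 𝒜 0 = 1)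
    (k : ℕ) (hk : 1 ≤ k)
    (wm wp : E ≃ₐ[ℂ] E)
    (hdeg : ∀ m : ℕ, ∀ x ∈ 𝒜 m, wm x ∈ 𝒜 m ∧ wp x ∈ 𝒜 m)
    (hm : wm * wm = 1) (hp : wp * wp = 1)
    (hord : (wp * wm) ^ k = 1)
    (hfaithful : Nat.card ↥(Subgroup.closure ({wm, wp} : Set (E ≃ₐ[ℂ] E))) = 2 * k)
    (nm np : ℕ) (hnm : 1 ≤ nm) (hnp : 1 ≤ np)
    (pm pp : E) (hpm : pm ∈ 𝒜 (2 * nm)) (hpp : pp ∈ 𝒜 (2 * np))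
    (hpmeig : wm pm = -pm) (hppeig : wp pp = -pp)
    (hdm : ∀ a : E, ∃! bc : E × E,
      (wm bc.1 = bc.1 ∧ wm bc.2 = bc.2) ∧ a = bc.1 + pm * bc.2)
    (hdp : ∀ a : E, ∃! bc : E × E,
      (wp bc.1 = bc.1 ∧ wp bc.2 = bc.2) ∧ a = bc.1 + pp * bc.2) :
    Even (k * (nm + np)) := by
  rcases Nat.even_or_odd k with hke | hko
  · exact hke.mul_right _
  -- k is odd; we show nm = np
  -- First: pm ≠ 0 and pp ≠ 0, using faithfulness
  have hcontra : ¬ (wm = 1 ∧ wp = 1) := by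
    rintro ⟨rfl, rfl⟩
    rw [Set.pair_eq_singleton, Subgroup.closure_singleton_one] at hfaithful
    simp at hfaithful
    omega
  have oddkill : ∀ u : E ≃ₐ[ℂ] E, u * u = 1 → u ^ k = 1 → u = 1 := by
    intro u hu2 huk
    obtain ⟨t, rfl⟩ := hko
    calc u = u ^ (2 * t + 1) * u := by rw [huk, one_mul]
      _ = u ^ (2 * (t + 1)) := by rw [← pow_succ, show 2 * t + 1 + 1 = 2 * (t + 1) by omega]
      _ = (u * u) ^ (t + 1) := by rw [pow_mul, pow_two]
      _ = 1 := by rw [hu2, one_pow]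
  have hko' : Odd k := hko
  have hpm0 : pm ≠ 0 := by
    rintro rfl
    have hwm1 : wm = 1 := by
      ext a
      obtain ⟨⟨b, c⟩, ⟨⟨hb, _⟩, heq⟩, -⟩ := hdm a
      simp only [zero_mul, add_zero] at heq
      subst heq
      simpa using hb
    have hwp1 : wp = 1 := by
      apply oddkill wp hp
      simpa [hwm1] using hord
    exact hcontra ⟨hwm1, hwp1⟩
  have hpp0 : pp ≠ 0 := by
    rintro rfl
    have hwp1 : wp = 1 := by
      ext a
      obtain ⟨⟨b, c⟩, ⟨⟨hb, _⟩, heq⟩, -⟩ := hdp a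
      simp only [zero_mul, add_zero] at heq
      subst heq
      simpa using hb
    have hwm1 : wm = 1 := by
      apply oddkill wm hm
      simpa [hwp1] using hord
    exact hcontra ⟨hwm1, hwp1⟩
  -- powers of wp * wm and wm * wp preserve degree
  have hzdeg : ∀ (j n : ℕ) (x : E), x ∈ 𝒜 n →
      (((wp * wm) ^ j) x ∈ 𝒜 n ∧ ((wm * wp) ^ j) x ∈ 𝒜 n) := by
    intro j
    induction j with
    | zero =>
      intro n x hx
      simp only [pow_zero, AlgEquiv.one_apply]
      exact ⟨hx, hx⟩
    | succ i ih =>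
      intro n x hx
      constructor
      · have hy : (wp * wm) x ∈ 𝒜 n := by
          rw [AlgEquiv.mul_apply]
          exact (hdeg n _ (hdeg n x hx).1).2
        rw [pow_succ, AlgEquiv.mul_apply]
        exact (ih n _ hy).1
      · have hy : (wm * wp) x ∈ 𝒜 n := by
          rw [AlgEquiv.mul_apply]
          exact (hdeg n _ (hdeg n x hx).2).1
        rw [pow_succ, AlgEquiv.mul_apply]
        exact (ih n _ hy).2
  set M := (k + 1) / 2 with hMdef
  have hconj1 : (wp * wm) ^ M * wm * ((wp * wm) ^ M)⁻¹ = wp :=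
    stmt11_conj wm wp k hko' hm hp hord
  have hordinv : (wm * wp) ^ k = 1 := by
    have hwmwp : (wm * wp) = (wp * wm)⁻¹ := by
      rw [mul_inv_rev, inv_eq_of_mul_eq_one_right hm, inv_eq_of_mul_eq_one_right hp]
    rw [hwmwp, inv_pow, hord, inv_one]
  have hconj2 : (wm * wp) ^ M * wp * ((wm * wp) ^ M)⁻¹ = wm :=
    stmt11_conj wp wm k hko' hp hm hordinv
  -- np ≤ nm and nm ≤ np by the degree comparison lemma
  have h1 : np ≤ nm := by
    have hgconj : wp * (wp * wm) ^ M = (wp * wm) ^ M * wm := by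
      have h := hconj1
      rw [mul_inv_eq_iff_eq_mul] at h
      exact h.symm
    have hwq : wp (((wp * wm) ^ M) pm) = -(((wp * wm) ^ M) pm) := by
      have h := congrArg (fun (u : E ≃ₐ[ℂ] E) => u pm) hgconj
      simpa [AlgEquiv.mul_apply, hpmeig, map_neg] using h
    have hq0 : ((wp * wm) ^ M) pm ≠ 0 := fun h =>
      hpm0 (((wp * wm) ^ M).injective (by rw [h, map_zero]))
    have := stmt11_aux 𝒜 wp (2 * nm) (2 * np) _ pp ((hzdeg M (2 * nm) pm hpm).1)
      hpp hq0 hpp0 hwq hppeig hdp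
    omega
  have h2 : nm ≤ np := by
    have hgconj : wm * (wm * wp) ^ M = (wm * wp) ^ M * wp := by
      have h := hconj2
      rw [mul_inv_eq_iff_eq_mul] at h
      exact h.symm
    have hwq : wm (((wm * wp) ^ M) pp) = -(((wm * wp) ^ M) pp) := by
      have h := congrArg (fun (u : E ≃ₐ[ℂ] E) => u pp) hgconj
      simpa [AlgEquiv.mul_apply, hppeig, map_neg] using h
    have hq0 : ((wm * wp) ^ M) pp ≠ 0 := fun h =>
      hpp0 (((wm * wp) ^ M).injective (by rw [h, map_zero]))
    have := stmt11_aux 𝒜 wm (2 * np) (2 * nm) _ pm ((hzdeg M (2 * np) pp hpp).2)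
      hpm hq0 hpm0 hwq hpmeig hdm
    omega
  have hnn : nm = np := le_antisymm h2 h1
  subst hnn
  exact ⟨k * nm, by ring⟩
end
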